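/- arXiv:math/0504301 — 9 statements merged into one kernel-verified Lean document; each statement's English description precedes it below -/
import Mathlib

section
/- Let Λ be an artin algebra and f : A → B a morphism of finitely generated Λ-modules. Let f' : Ker(f) → A be the inclusion, e' : Ker(f) → I an injective envelope, and e₁, e₂ : A → I two extensions of e' (i.e. f' ∘ e₁ = e' = f' ∘ e₂ in left-to-right composition, equivalently e₁ and e₂ restrict to e' on Ker f). Then the objects of the morphism category given by [f, e₁] : A → B ⊕ I and [f, e₂] : A → B ⊕ I are isomorphic, i.e. there exists an automorphism v of B ⊕ I with [f, e₁] ∘ v = [f, e₂]. -/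
universe u

/-- A linear map factors through an injective `Λ`-module. -/
def FactorsThroughInjective (Λ : Type u) [Ring Λ] {A B : Type u}
    [AddCommGroup A] [Module Λ A] [AddCommGroup B] [Module Λ B]
    (h : A →ₗ[Λ] B) : Prop :=
  ∃ (I : Type u) (_ : AddCommGroup I) (_ : Module Λ I),
    Module.Injective Λ I ∧ ∃ (p : A →ₗ[Λ] I) (q : I →ₗ[Λ] B), h = q ∘ₗ p

/-- `e : M →ₗ[Λ] I` is an injective envelope: `I` is injective, `e` is injective,
and the image of `e` is an essential submodule of `I`. -/
def IsInjectiveEnvelope (Λ : Type u) [Ring Λ] {M I : Type u}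
    [AddCommGroup M] [Module Λ M] [AddCommGroup I] [Module Λ I]
    (e : M →ₗ[Λ] I) : Prop :=
  Module.Injective Λ I ∧ Function.Injective e ∧
    ∀ N : Submodule Λ I, N ≠ ⊥ → N ⊓ LinearMap.range e ≠ ⊥

theorem aux
    (Λ : Type u) [Ring Λ]
    (A B I : Type u)
    [AddCommGroup A] [Module Λ A]
    [AddCommGroup B] [Module Λ B]
    [AddCommGroup I] [Module Λ I]
    (f : A →ₗ[Λ] B)
    (hInj : Module.Injective Λ I)
    (e₁ e₂ : A →ₗ[Λ] I)
    (h₁ : e₁ ∘ₗ (LinearMap.ker f).subtype = e₂ ∘ₗ (LinearMap.ker f).subtype) :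
    ∃ v : (B × I) ≃ₗ[Λ] (B × I),
      (v : (B × I) →ₗ[Λ] (B × I)) ∘ₗ (f.prod e₁) = f.prod e₂ := by
  set d : A →ₗ[Λ] I := e₂ - e₁ with hd
  have hker : LinearMap.ker f ≤ LinearMap.ker d := by
    intro x hx
    have := LinearMap.congr_fun h₁ ⟨x, hx⟩
    simp only [LinearMap.coe_comp, Function.comp_apply, Submodule.coe_subtype] at this
    simp [d, LinearMap.mem_ker, sub_eq_zero, this.symm]
  set g : LinearMap.range f →ₗ[Λ] I :=
    (Submodule.liftQ (LinearMap.ker f) d hker) ∘ₗ (f.quotKerEquivRange).symm.toLinearMap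
  have hg : ∀ a : A, g ⟨f a, LinearMap.mem_range_self f a⟩ = d a := by
    intro a
    simp [g, LinearMap.quotKerEquivRange_symm_apply_image f a (LinearMap.mem_range_self f a)]
  obtain ⟨h, hh⟩ := hInj.out (LinearMap.range f).subtype (Submodule.injective_subtype _) g
  have hhf : ∀ a : A, h (f a) = d a := fun a => (hh ⟨f a, LinearMap.mem_range_self f a⟩).trans (hg a)
  refine ⟨LinearEquiv.ofLinear
    (LinearMap.prod (LinearMap.fst Λ B I) (LinearMap.snd Λ B I + h ∘ₗ LinearMap.fst Λ B I))
    (LinearMap.prod (LinearMap.fst Λ B I) (LinearMap.snd Λ B I - h ∘ₗ LinearMap.fst Λ B I))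
    ?_ ?_, ?_⟩
  · ext x <;> simp
  · ext x <;> simp
  · ext x <;> simp [hhf x, d]

/-- two extensions of an injective envelope of `Ker f` give isomorphic
objects `[f, e₁], [f, e₂] : A → B ⊕ I` of the morphism category, via an automorphism
of `B ⊕ I` fixing the source `A`. -/
theorem stmt0
    (k : Type u) [CommRing k] [IsArtinianRing k]
    (Λ : Type u) [Ring Λ] [Algebra k Λ] [Module.Finite k Λ]
    (A B I : Type u)
    [AddCommGroup A] [Module Λ A] [Module.Finite Λ A]
    [AddCommGroup B] [Module Λ B] [Module.Finite Λ B]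
    [AddCommGroup I] [Module Λ I] [Module.Finite Λ I]
    (f : A →ₗ[Λ] B)
    (e' : ↥(LinearMap.ker f) →ₗ[Λ] I)
    (he' : IsInjectiveEnvelope Λ e')
    (e₁ e₂ : A →ₗ[Λ] I)
    (h₁ : e₁ ∘ₗ (LinearMap.ker f).subtype = e')
    (h₂ : e₂ ∘ₗ (LinearMap.ker f).subtype = e') :
    ∃ v : (B × I) ≃ₗ[Λ] (B × I),
      (v : (B × I) →ₗ[Λ] (B × I)) ∘ₗ (f.prod e₁) = f.prod e₂ :=
  aux Λ A B I f he'.1 e₁ e₂ (h₁.trans h₂.symm)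
end

section
/- Let Λ be an artin algebra and (f : A → B) an object of the morphism category H(Λ). Let e : A → I(Ker f) be an extension of an injective envelope of Ker f and let Mimo(f) = [f, e] : A → B ⊕ I(Ker f). Then the canonical morphism Mimo(f) → f given by the pair (1_A, projection B ⊕ I(Ker f) → B) is a right approximation of f with respect to the full subcategory S(Λ) of monomorphisms: for every monomorphism g : C → D of finitely generated Λ-modules and every commutative square (u, v) : g → f, there exists a commutative square (u', v') : g → Mimo(f) whose composition with the canonical morphism Mimo(f) → f equals (u, v). -/
universe u

/-- the canonical morphism `Mimo(f) → f` (identity on `A`, projection onto `B`)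
is a right `S(Λ)`-approximation: any commutative square from a monomorphism `g : C → D`
to `f` factors through it. -/
theorem stmt3
    (k : Type u) [CommRing k] [IsArtinianRing k]
    (Λ : Type u) [Ring Λ] [Algebra k Λ] [Module.Finite k Λ]
    (A B IK C D : Type u)
    [AddCommGroup A] [Module Λ A] [Module.Finite Λ A]
    [AddCommGroup B] [Module Λ B] [Module.Finite Λ B]
    [AddCommGroup IK] [Module Λ IK] [Module.Finite Λ IK]
    [AddCommGroup C] [Module Λ C] [Module.Finite Λ C]
    [AddCommGroup D] [Module Λ D] [Module.Finite Λ D]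
    (f : A →ₗ[Λ] B)
    (env : ↥(LinearMap.ker f) →ₗ[Λ] IK)
    (henv : IsInjectiveEnvelope Λ env)
    (e : A →ₗ[Λ] IK)
    (he : e ∘ₗ (LinearMap.ker f).subtype = env)
    (g : C →ₗ[Λ] D) (hg : Function.Injective g)
    (u : C →ₗ[Λ] A) (v : D →ₗ[Λ] B)
    (hsq : f ∘ₗ u = v ∘ₗ g) :
    ∃ (u' : C →ₗ[Λ] A) (v' : D →ₗ[Λ] (B × IK)),
      (f.prod e) ∘ₗ u' = v' ∘ₗ g ∧
      u' = u ∧ (LinearMap.fst Λ B IK) ∘ₗ v' = v := by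
  obtain ⟨w, hw⟩ := henv.1.out g hg (e ∘ₗ u)
  refine ⟨u, v.prod w, ?_, rfl, rfl⟩
  ext c
  · exact congrFun (congrArg DFunLike.coe hsq) c
  · exact (hw c).symm
end

section
/- Let Λ be an artin algebra, B a finitely generated Λ-module with no nonzero injective direct summands, and h : A → B a morphism that factors through an injective module. Then the socle of A is contained in Ker(h); equivalently, Soc(Ker h) = Soc(A). -/
/-!
Suppose a simple submodule `S` of `A` is not killed by `h = q ∘ p`, with `p : A → I` and `I`
injective. Then `P = p(S)` is a nonzero submodule of `I` meeting `ker q` trivially. A maximal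
essential extension `E` of `P` inside `I` is a direct summand of `I` (this is where injectivity of
`I` enters), hence injective, and still meets `ker q` trivially since every nonzero submodule of
`E` meets `P`. So `q` maps `E` isomorphically onto an injective submodule of `B`, which splits
off as a nonzero injective direct summand of `B`.
-/

universe u v

/-- The socle of a module: the sum of all simple (= atomic) submodules. -/
def socle (Λ : Type u) [Ring Λ] (M : Type u) [AddCommGroup M] [Module Λ M] :
    Submodule Λ M :=
  sSup {N : Submodule Λ M | IsAtom N}

open Submodule LinearMap

section Lattice

variable {α : Type*} [CompleteLattice α]

/-- `b` is an essential extension of `a`: every nonzero `c ≤ b` meets `a`. -/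
def IsEssentialExtension (a b : α) : Prop :=
  a ≤ b ∧ ∀ c ≤ b, Disjoint c a → c = ⊥

namespace IsEssentialExtension

theorem refl (a : α) : IsEssentialExtension a a :=
  ⟨le_rfl, fun _ hca hdis => hdis.eq_bot_of_le hca⟩

theorem trans {a b c : α} (hab : IsEssentialExtension a b) (hbc : IsEssentialExtension b c) :
    IsEssentialExtension a c :=
  ⟨hab.1.trans hbc.1, fun d hdc hda => hbc.2 d hdc <|
    disjoint_iff.mpr <| hab.2 _ inf_le_right (hda.mono_left inf_le_left)⟩

theorem le_of_isAtom {a s : α} (ha : IsEssentialExtension a ⊤) (hs : IsAtom s) : s ≤ a := by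
  by_contra hsa
  exact hs.ne_bot (ha.2 s le_top (hs.not_le_iff_disjoint.mp hsa))

end IsEssentialExtension

variable [IsCompactlyGenerated α]

theorem exists_maximal_isEssentialExtension (a : α) :
    ∃ b, Maximal (IsEssentialExtension a) b := by
  obtain ⟨b, -, hb⟩ := zorn_le_nonempty₀ {b | IsEssentialExtension a b}
    (fun c hc hchain y hy => ⟨sSup c, ⟨(hc hy).1.trans (le_sSup hy), fun d hd hda => by
      rw [← inf_eq_left.mpr hd, hchain.directedOn.inf_sSup_eq, iSup₂_eq_bot]
      exact fun b hb => (hc hb).2 _ inf_le_right (hda.mono_left inf_le_left)⟩,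
      fun _ => le_sSup⟩) a (.refl a)
  exact ⟨b, hb⟩

theorem exists_maximal_disjoint (a : α) : ∃ c, Maximal (Disjoint a) c := by
  obtain ⟨c, -, hc⟩ := zorn_le_nonempty₀ {c | Disjoint a c}
    (fun c hc hchain _ _ => ⟨sSup c, hchain.directedOn.disjoint_sSup_right.mpr hc,
      fun _ => le_sSup⟩) ⊥ disjoint_bot_right
  exact ⟨c, hc⟩

end Lattice

theorem Module.Injective.of_retract {R : Type*} [Ring R] {M N : Type v}
    [AddCommGroup M] [Module R M] [AddCommGroup N] [Module R N] [Module.Injective R M]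
    (s : N →ₗ[R] M) (r : M →ₗ[R] N) (hrs : r ∘ₗ s = LinearMap.id) : Module.Injective R N :=
  ⟨fun _ _ _ _ _ _ f hf g => by
    obtain ⟨F, hF⟩ := Module.Injective.out f hf (s ∘ₗ g)
    exact ⟨r ∘ₗ F, fun x => by simp [hF, ← LinearMap.comp_apply r s, hrs]⟩⟩

namespace Submodule

variable {R M : Type*} [Ring R] [AddCommGroup M] [Module R M]

theorem isEssentialExtension_map_mkQ {E C : Submodule R M} (hC : Maximal (Disjoint E) C) :
    IsEssentialExtension (E.map C.mkQ) ⊤ := by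
  refine ⟨le_top, fun N _ hN => ?_⟩
  have hCN : C ≤ N.comap C.mkQ := fun x hx => by
    rw [mem_comap, mkQ_apply, (Quotient.mk_eq_zero C).mpr hx]
    exact N.zero_mem
  have hEN : Disjoint E (N.comap C.mkQ) := by
    rw [disjoint_def]
    intro x hxE hxN
    have hx : C.mkQ x = 0 := disjoint_def.mp hN _ hxN (mem_map_of_mem hxE)
    rw [mkQ_apply, Quotient.mk_eq_zero] at hx
    exact disjoint_def.mp hC.prop x hxE hx
  rw [← N.map_comap_eq_of_surjective C.mkQ_surjective, ← hC.eq_of_le hEN hCN, mkQ_map_self]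

theorem exists_isCompl_of_injective (N : Submodule R M) [Module.Injective R N] :
    ∃ N', IsCompl N N' := by
  obtain ⟨r, hr⟩ := Module.Injective.out N.subtype N.injective_subtype LinearMap.id
  exact ⟨_, LinearMap.isCompl_of_proj hr⟩

/-- For `C` maximal disjoint from `E`, the inclusion `E → M` extends along `E → M ⧸ C` to an
injective `g : M ⧸ C → M` whose range is an essential extension of `E`, hence is `E`. -/
theorem exists_isCompl_of_forall_isEssentialExtension_eq {M : Type v} [AddCommGroup M]
    [Module R M] [Module.Injective R M] {E : Submodule R M}
    (hE : ∀ F, IsEssentialExtension E F → F = E) : ∃ C, IsCompl E C := by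
  obtain ⟨C, hC⟩ := exists_maximal_disjoint E
  have hj : Function.Injective (C.mkQ ∘ₗ E.subtype) := by
    rw [← ker_eq_bot, ker_comp, ker_mkQ, ← disjoint_iff_comap_eq_bot]
    exact hC.prop
  obtain ⟨g, hg⟩ := Module.Injective.out (C.mkQ ∘ₗ E.subtype) hj E.subtype
  have hgE : ∀ x ∈ E, g (C.mkQ x) = x := fun x hx => hg ⟨x, hx⟩
  have hess := isEssentialExtension_map_mkQ hC
  have hg_ker : ker g = ⊥ := hess.2 _ le_top <| by
    rw [disjoint_def]
    rintro _ hy ⟨x, hx, rfl⟩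
    rw [mem_ker, hgE x hx] at hy
    simp [hy]
  have hrange : range g = E := hE _ ⟨fun x hx => ⟨C.mkQ x, hgE x hx⟩, fun N hN hNE => by
    have hN0 : N.comap g = ⊥ := hess.2 _ le_top <| by
      rw [disjoint_def]
      rintro _ hy ⟨x, hx, rfl⟩
      rw [mem_comap, hgE x hx] at hy
      simp [disjoint_def.mp hNE x hy hx]
    rw [← map_comap_eq_self hN, hN0, map_bot]⟩
  have hmap : E.map C.mkQ = ⊤ := by
    apply map_injective_of_injective (ker_eq_bot.mp hg_ker)
    rw [map_top, hrange, ← map_comp, ← E.range_subtype, ← range_comp]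
    congr 1
    exact LinearMap.ext hg
  refine ⟨C, hC.prop, codisjoint_iff.mpr ?_⟩
  rw [sup_comm, ← comap_map_mkQ, hmap, comap_top]

end Submodule

theorem exists_injective_summand_of_disjoint_ker {R : Type*} [Ring R] {I B : Type v}
    [AddCommGroup I] [Module R I] [Module.Injective R I] [AddCommGroup B] [Module R B]
    (q : I →ₗ[R] B) {P : Submodule R I} (hP : P ≠ ⊥) (hPq : Disjoint P (ker q)) :
    ∃ N : Submodule R B, N ≠ ⊥ ∧ (∃ N', IsCompl N N') ∧ Module.Injective R N := by
  obtain ⟨E, hE⟩ := exists_maximal_isEssentialExtension P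
  obtain ⟨C, hEC⟩ := exists_isCompl_of_forall_isEssentialExtension_eq fun F hF =>
    (hE.eq_of_le (hE.prop.trans hF) hF.1).symm
  have : Module.Injective R E :=
    .of_retract E.subtype (E.projectionOnto C hEC) (by ext; simp [projectionOnto_apply_left])
  have hEq : Disjoint E (ker q) :=
    disjoint_iff.mpr <| hE.prop.2 _ inf_le_left (hPq.symm.mono_left inf_le_right)
  have hqE : Function.Injective (q.domRestrict E) := by
    rw [← ker_eq_bot, ker_domRestrict, ← disjoint_iff_comap_eq_bot]
    exact hEq
  let e := LinearEquiv.ofInjective _ hqE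
  have : Module.Injective R (range (q.domRestrict E)) :=
    .of_retract e.symm.toLinearMap e.toLinearMap (by ext; simp)
  refine ⟨_, ?_, exists_isCompl_of_injective _, this⟩
  rw [range_domRestrict, Ne, ← le_bot_iff, map_le_iff_le_comap, comap_bot]
  exact fun hEk => hP (le_bot_iff.mp <| hE.prop.1.trans (hEq.eq_bot_of_le hEk).le)

theorem FactorsThroughInjective.isEssentialExtension_ker {Λ A B : Type u} [Ring Λ]
    [AddCommGroup A] [Module Λ A] [AddCommGroup B] [Module Λ B]
    (hB : ∀ N : Submodule Λ B, (∃ N' : Submodule Λ B, IsCompl N N') →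
      Module.Injective Λ ↥N → N = ⊥)
    {h : A →ₗ[Λ] B} (hfact : FactorsThroughInjective Λ h) :
    IsEssentialExtension (ker h) ⊤ := by
  obtain ⟨I, _, _, hI, p, q, rfl⟩ := hfact
  refine ⟨le_top, fun S _ hS => ?_⟩
  by_contra hS0
  have hP : S.map p ≠ ⊥ := by
    rw [Ne, ← le_bot_iff, map_le_iff_le_comap, comap_bot]
    exact fun hSp => hS0 (hS.eq_bot_of_le (hSp.trans (ker_le_ker_comp p q)))
  have hPq : Disjoint (S.map p) (ker q) := by
    rw [disjoint_iff, map_inf_eq_map_inf_comap, ← ker_comp, disjoint_iff.mp hS, Submodule.map_bot]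
  obtain ⟨N, hN, hNsum, hNinj⟩ := exists_injective_summand_of_disjoint_ker q hP hPq
  exact hN (hB N hNsum hNinj)

theorem stmt7_general
    (Λ : Type u) [Ring Λ]
    (A B : Type u)
    [AddCommGroup A] [Module Λ A]
    [AddCommGroup B] [Module Λ B]
    (hB : ∀ N : Submodule Λ B, (∃ N' : Submodule Λ B, IsCompl N N') →
      Module.Injective Λ ↥N → N = ⊥)
    (h : A →ₗ[Λ] B)
    (hfact : FactorsThroughInjective Λ h) :
    socle Λ A ≤ LinearMap.ker h :=
  sSup_le fun _ hS => (hfact.isEssentialExtension_ker hB).le_of_isAtom hS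

/-- if `B` has no nonzero injective direct summands and `h : A → B` factors
through an injective module, then `Soc(A) ⊆ Ker h`. -/
theorem stmt7
    (k : Type u) [CommRing k] [IsArtinianRing k]
    (Λ : Type u) [Ring Λ] [Algebra k Λ] [Module.Finite k Λ]
    (A B : Type u)
    [AddCommGroup A] [Module Λ A] [Module.Finite Λ A]
    [AddCommGroup B] [Module Λ B] [Module.Finite Λ B]
    (hB : ∀ N : Submodule Λ B, (∃ N' : Submodule Λ B, IsCompl N N') →
      Module.Injective Λ ↥N → N = ⊥)
    (h : A →ₗ[Λ] B)
    (hfact : FactorsThroughInjective Λ h) :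
    socle Λ A ≤ LinearMap.ker h :=
  stmt7_general Λ A B hB h hfact
end

section
/- Let Λ be an artin algebra, B a finitely generated Λ-module with no nonzero injective direct summands, and f, g : A → B morphisms such that g − f factors through an injective module. Then Ker(f) ∩ Soc(A) = Ker(g) ∩ Soc(A); consequently the injective envelopes of Ker(f) and Ker(g) are isomorphic. -/
universe u

lemma aux_noeth_transfer {k : Type u} [CommRing k] (J : Ideal k) {M : Type u}
    [AddCommGroup M] [Module k M] [mkJ : Module (k ⧸ J) M] [IsScalarTower k (k ⧸ J) M]
    (h : IsNoetherian (k ⧸ J) M) : IsNoetherian k M := by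
  rw [← monotone_stabilizes_iff_noetherian] at h ⊢
  have key : ∀ p : Submodule k M, ∃ q : Submodule (k ⧸ J) M, (q : Set M) = (p : Set M) := by
    intro p
    refine ⟨⟨⟨⟨(p : Set M), ?_⟩, ?_⟩, ?_⟩, rfl⟩
    · intro a b ha hb; exact p.add_mem ha hb
    · exact p.zero_mem
    · rintro c x hx
      obtain ⟨r, rfl⟩ := Ideal.Quotient.mk_surjective c
      have : (Ideal.Quotient.mk J r) • x = r • x := by
        rw [← Ideal.Quotient.algebraMap_eq, algebraMap_smul]
      simpa [this] using p.smul_mem r hx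
  choose φ hφ using key
  intro f
  obtain ⟨n, hn⟩ := h ⟨fun i => φ (f i), fun i j hij => by
    change (φ (f i) : Set M) ⊆ (φ (f j) : Set M)
    rw [hφ, hφ]; exact f.monotone hij⟩
  refine ⟨n, fun m hm => ?_⟩
  have := hn m hm
  apply SetLike.coe_injective
  rw [← hφ (f n), ← hφ (f m)]
  exact congrArg SetLike.coe this
lemma aux_hopkins {k : Type u} [CommRing k] [IsArtinianRing k] :
    ∀ (n : ℕ) (M : Type u) [AddCommGroup M] [Module k M] [IsArtinian k M],
      ((Ideal.jacobson (⊥ : Ideal k)) ^ n) • (⊤ : Submodule k M) = ⊥ → IsNoetherian k M := by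
  intro n
  induction n with
  | zero =>
    intro M _ _ _ hM
    rw [pow_zero, Ideal.one_eq_top, Submodule.top_smul] at hM
    haveI : Subsingleton M := by
      rw [← Submodule.subsingleton_iff k]
      exact subsingleton_of_bot_eq_top hM.symm
    infer_instance
  | succ n ih =>
    intro M _ _ _ hM
    set J := Ideal.jacobson (⊥ : Ideal k) with hJ
    set N : Submodule k M := J • ⊤ with hN
    -- the quotient M ⧸ N is a module over k ⧸ J
    haveI hsemiring : IsSemisimpleRing (k ⧸ J) := by
      haveI : IsReduced (k ⧸ J) := (Ideal.isRadical_iff_quotient_reduced J).mp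
        (Ideal.isRadical_jacobson ⊥)
      exact IsArtinianRing.isSemisimpleRing_of_isReduced (k ⧸ J)
    haveI : IsScalarTower k (k ⧸ J) (M ⧸ N) :=
      Module.IsTorsionBySet.isScalarTower _
    haveI hqart : IsArtinian (k ⧸ J) (M ⧸ N) := isArtinian_of_tower k inferInstance
    haveI : IsSemisimpleModule (k ⧸ J) (M ⧸ N) := inferInstance
    haveI hqnoe : IsNoetherian (k ⧸ J) (M ⧸ N) :=
      (IsSemisimpleModule.finite_tfae (R := k ⧸ J) (M := M ⧸ N)).out 1 2 |>.mpr hqart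
    haveI hq : IsNoetherian k (M ⧸ N) := aux_noeth_transfer J hqnoe
    have hNsmall : (J ^ n) • (⊤ : Submodule k ↥N) = ⊥ := by
      apply Submodule.map_injective_of_injective (N.injective_subtype)
      rw [Submodule.map_smul'', Submodule.map_top, Submodule.range_subtype, Submodule.map_bot, hN,
        ← Submodule.smul_assoc, smul_eq_mul, ← pow_succ]
      exact hM
    haveI hNnoe : IsNoetherian k ↥N := ih ↥N hNsmall
    exact (isNoetherian_iff_submodule_quotient N).mpr ⟨hNnoe, hq⟩

lemma aux_hopkins' {k : Type u} [CommRing k] [IsArtinianRing k]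
    (M : Type u) [AddCommGroup M] [Module k M] [IsArtinian k M] : IsNoetherian k M := by
  obtain ⟨n, hn⟩ := IsArtinianRing.isNilpotent_jacobson_bot (R := k)
  apply aux_hopkins n M
  rw [hn]
  simp
lemma aux_chain {k Λ M : Type u} [CommRing k] [IsArtinianRing k] [Ring Λ] [Algebra k Λ]
    [Module.Finite k Λ] [AddCommGroup M] [Module Λ M] [Module.Finite Λ M] :
    IsArtinian Λ M ∧ IsNoetherian Λ M := by
  letI : Module k M := Module.compHom M (algebraMap k Λ)
  haveI : IsScalarTower k Λ M := IsScalarTower.of_algebraMap_smul fun c m => rfl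
  haveI : Module.Finite k M := Module.Finite.trans Λ M
  haveI hart : IsArtinian k M := isArtinian_of_fg_of_artinian'
  haveI : IsNoetherian k M := aux_hopkins' M
  exact ⟨isArtinian_of_tower k hart, isNoetherian_of_tower k ‹IsNoetherian k M›⟩

lemma aux_retract {Λ J R' : Type u} [Ring Λ] [AddCommGroup J] [Module Λ J]
    [AddCommGroup R'] [Module Λ R'] (hJ : Module.Injective Λ J)
    (s : R' →ₗ[Λ] J) (r : J →ₗ[Λ] R') (hrs : ∀ x, r (s x) = x) :
    Module.Injective Λ R' := by
  constructor
  intro X Y _ _ _ _ i hi φ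
  obtain ⟨h, hh⟩ := hJ.out i hi (s ∘ₗ φ)
  exact ⟨r ∘ₗ h, fun x => by simp [hh x, hrs]⟩

lemma aux_no_summand {Λ B J : Type u} [Ring Λ] [AddCommGroup B] [Module Λ B]
    [AddCommGroup J] [Module Λ J] [IsArtinian Λ B] [IsNoetherian Λ B]
    (hB : ∀ N : Submodule Λ B, (∃ N' : Submodule Λ B, IsCompl N N') →
      Module.Injective Λ ↥N → N = ⊥)
    (hJ : Module.Injective Λ J) (t : B →ₗ[Λ] J) (q : J →ₗ[Λ] B)
    (T' : Submodule Λ B) (hT' : T' ≠ ⊥) (hfix : ∀ x ∈ T', q (t x) = x) : False := by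
  set u : B →ₗ[Λ] B := q ∘ₗ t with hu
  obtain ⟨nr, hnr⟩ := IsArtinian.monotone_stabilizes (u.iterateRange)
  obtain ⟨nk, hnk⟩ := monotone_stabilizes_iff_noetherian.mpr ‹_› (u.iterateKer)
  set n := max nr nk with hn
  have hrange : LinearMap.range (u ^ (n+1)) = LinearMap.range (u ^ n) := by
    have h1 := hnr n (le_max_left _ _)
    have h2 := hnr (n+1) ((le_max_left _ _).trans (Nat.le_succ n))
    exact (h1.symm.trans h2).symm
  have hker : LinearMap.ker (u ^ (n+1)) = LinearMap.ker (u ^ n) := by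
    have h1 := hnk n (le_max_right _ _)
    have h2 := hnk (n+1) ((le_max_right _ _).trans (Nat.le_succ n))
    exact (h1.symm.trans h2).symm
  set R : Submodule Λ B := LinearMap.range (u ^ n) with hR
  have hmaps : ∀ x ∈ R, u x ∈ R := by
    rintro x ⟨z, rfl⟩
    have : u ((u ^ n) z) = (u ^ (n+1)) z := by
      rw [pow_succ']; rfl
    rw [this, ← hrange]
    exact LinearMap.mem_range_self _ z
  set v : ↥R →ₗ[Λ] ↥R := u.restrict hmaps with hv
  have hv_coe : ∀ (x : ↥R), ((v x : ↥R) : B) = u (x : B) := fun x => rfl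
  have hvpow : ∀ (m : ℕ) (x : ↥R), (((v ^ m) x : ↥R) : B) = (u ^ m) (x : B) := by
    intro m
    induction m with
    | zero => intro x; simp
    | succ m ih =>
      intro x
      rw [pow_succ' v m, pow_succ' u m, Module.End.mul_apply, Module.End.mul_apply,
        hv_coe, ih x]
  have hvinj : Function.Injective v := by
    rw [← LinearMap.ker_eq_bot, eq_bot_iff]
    rintro ⟨x, hxR⟩ hx
    rw [LinearMap.mem_ker] at hx
    obtain ⟨z, rfl⟩ := hxR
    have h0 : u ((u ^ n) z) = 0 := by
      have := congrArg (Subtype.val) hx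
      rwa [hv_coe] at this
    have : z ∈ LinearMap.ker (u ^ (n+1)) := by
      rw [LinearMap.mem_ker, pow_succ']; exact h0
    rw [hker, LinearMap.mem_ker] at this
    simpa [Submodule.mem_bot] using Subtype.ext this
  have hvsurj : Function.Surjective v := by
    rintro ⟨y, hy⟩
    rw [← hrange] at hy
    obtain ⟨z, hz⟩ := hy
    refine ⟨⟨(u ^ n) z, LinearMap.mem_range_self _ z⟩, Subtype.ext ?_⟩
    rw [hv_coe]
    show u ((u ^ n) z) = y
    rw [← Module.End.mul_apply, ← pow_succ']
    exact hz
  set e := LinearEquiv.ofBijective v ⟨hvinj, hvsurj⟩ with he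
  set w : ↥R →ₗ[Λ] ↥R := (e.symm : ↥R ≃ₗ[Λ] ↥R).toLinearMap with hw
  have hwv : ∀ x, w (v x) = x := fun x => e.symm_apply_apply x
  have hwvpow : ∀ (m : ℕ) (x : ↥R), (w ^ m) ((v ^ m) x) = x := by
    intro m
    induction m with
    | zero => intro x; simp
    | succ m ih =>
      intro x
      rw [pow_succ w m, pow_succ' v m, Module.End.mul_apply, Module.End.mul_apply, hwv, ih]
  set s : ↥R →ₗ[Λ] J := t ∘ₗ R.subtype with hs
  have hmem : ∀ j : J, ((u ^ n) ∘ₗ q) j ∈ R := fun j => LinearMap.mem_range_self _ _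
  set ρ : J →ₗ[Λ] ↥R := LinearMap.codRestrict R ((u ^ n) ∘ₗ q) hmem with hρ
  set rr : J →ₗ[Λ] ↥R := (w ^ (n+1)) ∘ₗ ρ with hrr
  have hretr : ∀ x : ↥R, rr (s x) = x := by
    intro x
    have h1 : ρ (s x) = (v ^ (n+1)) x := by
      apply Subtype.ext
      rw [hvpow (n+1) x]
      show (u ^ n) (q (t (x : B))) = (u ^ (n+1)) (x : B)
      rw [pow_succ]; rfl
    show (w ^ (n+1)) (ρ (s x)) = x
    rw [h1, hwvpow]
  haveI hinjR : Module.Injective Λ ↥R := aux_retract hJ s rr hretr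
  obtain ⟨π, hπ⟩ := hinjR.out R.subtype Subtype.val_injective LinearMap.id
  have hcompl : IsCompl R (LinearMap.ker π) := by
    constructor
    · rw [disjoint_iff, eq_bot_iff]
      rintro x hx
      rw [Submodule.mem_inf] at hx
      obtain ⟨hxR, hxK⟩ := hx
      rw [LinearMap.mem_ker] at hxK
      have h1 : π x = (⟨x, hxR⟩ : ↥R) := hπ ⟨x, hxR⟩
      rw [hxK] at h1
      simpa [Submodule.mem_bot] using congrArg Subtype.val h1.symm
    · rw [codisjoint_iff, eq_top_iff]
      intro b _
      have hker' : b - ((π b : ↥R) : B) ∈ LinearMap.ker π := by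
        rw [LinearMap.mem_ker, map_sub]
        have : π ((π b : ↥R) : B) = π b := hπ (π b)
        rw [this, sub_self]
      exact Submodule.mem_sup.mpr ⟨((π b : ↥R) : B), (π b).2, b - ((π b : ↥R) : B), hker',
        by abel⟩
  have hRbot := hB R ⟨_, hcompl⟩ hinjR
  obtain ⟨x, hxT, hx0⟩ := Submodule.ne_bot_iff _ |>.mp hT'
  have hfixpow : ∀ m : ℕ, (u ^ m) x = x := by
    intro m
    induction m with
    | zero => simp
    | succ m ih =>
      rw [pow_succ', Module.End.mul_apply, ih]
      exact hfix x hxT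
  have hxR : x ∈ R := by
    rw [hR, ← hfixpow n]
    exact LinearMap.mem_range_self _ x
  rw [hRbot] at hxR
  exact hx0 (by simpa using hxR)

lemma aux_atom_step {Λ A B J : Type u} [Ring Λ] [AddCommGroup A] [Module Λ A]
    [AddCommGroup B] [Module Λ B] [AddCommGroup J] [Module Λ J]
    [IsArtinian Λ B] [IsNoetherian Λ B]
    (hB : ∀ N : Submodule Λ B, (∃ N' : Submodule Λ B, IsCompl N N') →
      Module.Injective Λ ↥N → N = ⊥)
    (hJ : Module.Injective Λ J) (p : A →ₗ[Λ] J) (q : J →ₗ[Λ] B)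
    (f g : A →ₗ[Λ] B) (hpq : g - f = q ∘ₗ p)
    (T : Submodule Λ A) (hatom : IsAtom T) (hTf : T ≤ LinearMap.ker f) :
    T ≤ LinearMap.ker g := by
  by_contra hTg
  have hlt : T ⊓ LinearMap.ker g < T :=
    lt_of_le_of_ne inf_le_left (fun h => hTg (by rw [inf_eq_left] at h; exact h))
  have hdisj : T ⊓ LinearMap.ker g = ⊥ := hatom.2 _ hlt
  set T' := T.map g with hT'
  have hT'ne : T' ≠ ⊥ := by
    obtain ⟨x, hxT, hx0⟩ := (Submodule.ne_bot_iff T).mp hatom.1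
    have hgx : g x ≠ 0 := fun h0 => by
      have hmem : x ∈ T ⊓ LinearMap.ker g := Submodule.mem_inf.mpr ⟨hxT, h0⟩
      rw [hdisj] at hmem
      exact hx0 (by simpa using hmem)
    exact (Submodule.ne_bot_iff T').mpr ⟨g x, Submodule.mem_map_of_mem hxT, hgx⟩
  set gT : ↥T →ₗ[Λ] ↥T' :=
    LinearMap.codRestrict T' (g ∘ₗ T.subtype) (fun x => Submodule.mem_map_of_mem x.2) with hgT
  have hgTinj : Function.Injective gT := by
    rw [← LinearMap.ker_eq_bot, eq_bot_iff]
    rintro x hx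
    rw [LinearMap.mem_ker] at hx
    have hg0 : g (x : A) = 0 := congrArg Subtype.val hx
    have hmem : (x : A) ∈ T ⊓ LinearMap.ker g := Submodule.mem_inf.mpr ⟨x.2, hg0⟩
    rw [hdisj] at hmem
    simpa [Submodule.mem_bot] using Subtype.ext (by simpa using hmem : (x : A) = 0)
  have hgTsurj : Function.Surjective gT := by
    rintro ⟨y, hy⟩
    obtain ⟨x, hxT, rfl⟩ := hy
    exact ⟨⟨x, hxT⟩, rfl⟩
  set eT := LinearEquiv.ofBijective gT ⟨hgTinj, hgTsurj⟩ with heT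
  set φ : ↥T' →ₗ[Λ] J := (p ∘ₗ T.subtype) ∘ₗ (eT.symm : ↥T' ≃ₗ[Λ] ↥T).toLinearMap with hφ
  obtain ⟨t, ht⟩ := hJ.out T'.subtype Subtype.val_injective φ
  apply aux_no_summand hB hJ t q T' hT'ne
  intro y hy
  have h1 : t y = φ ⟨y, hy⟩ := ht ⟨y, hy⟩
  set z : ↥T := eT.symm ⟨y, hy⟩ with hz
  have h2 : q (t y) = q (p (z : A)) := by rw [h1]; rfl
  have h3 : q (p (z : A)) = g (z : A) - f (z : A) := by
    have := congrArg (fun (m : A →ₗ[Λ] B) => m (z : A)) hpq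
    simpa using this.symm
  have h4 : f (z : A) = 0 := hTf z.2
  have h5 : g (z : A) = y := by
    have h6 : gT z = ⟨y, hy⟩ := eT.apply_symm_apply ⟨y, hy⟩
    exact congrArg Subtype.val h6
  rw [h2, h3, h4, h5, sub_zero]


lemma aux_socle_semisimple {Λ A : Type u} [Ring Λ] [AddCommGroup A] [Module Λ A] :
    IsSemisimpleModule Λ ↥(socle Λ A) := by
  set S := socle Λ A with hS
  apply isSemisimpleModule_of_isSemisimpleModule_submodule'
    (p := fun T : {T : Submodule Λ A // IsAtom T} => Submodule.comap S.subtype T.1)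
  · intro T
    haveI : IsSimpleModule Λ T.1 := isSimpleModule_iff_isAtom.mpr T.2
    haveI : IsSimpleModule Λ (Submodule.comap S.subtype T.1) :=
      IsSimpleModule.congr (Submodule.comapSubtypeEquivOfLe (le_sSup T.2 : T.1 ≤ S))
    infer_instance
  · apply Submodule.map_injective_of_injective S.injective_subtype
    rw [Submodule.map_iSup, Submodule.map_top, Submodule.range_subtype]
    have hc : ∀ T : {T : Submodule Λ A // IsAtom T},
        Submodule.map S.subtype (Submodule.comap S.subtype T.1) = T.1 := by
      intro T
      rw [Submodule.map_comap_subtype]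
      exact inf_eq_right.mpr (le_sSup T.2)
    rw [iSup_congr hc, hS]
    rw [socle, sSup_eq_iSup']
    rfl
lemma aux_socle_le {Λ A : Type u} [Ring Λ] [AddCommGroup A] [Module Λ A]
    (W : Submodule Λ A) (hW : W ≤ socle Λ A) :
    W ≤ sSup {T : Submodule Λ A | IsAtom T ∧ T ≤ W} := by
  haveI := aux_socle_semisimple (Λ := Λ) (A := A)
  set S := socle Λ A with hS
  set W' : Submodule Λ ↥S := Submodule.comap S.subtype W with hW'
  have h1 : sSup {m : Submodule Λ ↥S | IsSimpleModule Λ ↥m ∧ m ≤ W'} = W' :=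
    IsSemisimpleModule.sSup_simples_le W'
  have h2 : Submodule.map S.subtype W' = W := by
    rw [hW', Submodule.map_comap_subtype]
    exact inf_eq_right.mpr hW
  conv_lhs => rw [← h2, ← h1]
  rw [sSup_eq_iSup', Submodule.map_iSup]
  apply iSup_le
  rintro ⟨m, hm_simple, hm_le⟩
  apply le_sSup
  constructor
  · rw [← isSimpleModule_iff_isAtom]
    haveI := hm_simple
    exact IsSimpleModule.congr
      (Submodule.equivMapOfInjective S.subtype S.injective_subtype m).symm
  · calc Submodule.map S.subtype m ≤ Submodule.map S.subtype W' := Submodule.map_mono hm_le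
      _ = W := h2

lemma aux_env_unique {Λ S I1 I2 : Type u} [Ring Λ] [AddCommGroup S] [Module Λ S]
    [AddCommGroup I1] [Module Λ I1] [AddCommGroup I2] [Module Λ I2]
    (e1 : S →ₗ[Λ] I1) (e2 : S →ₗ[Λ] I2)
    (h1 : Module.Injective Λ I1) (inj1 : Function.Injective e1)
    (ess1 : ∀ N : Submodule Λ I1, N ≠ ⊥ → N ⊓ LinearMap.range e1 ≠ ⊥)
    (h2 : Module.Injective Λ I2) (inj2 : Function.Injective e2)
    (ess2 : ∀ N : Submodule Λ I2, N ≠ ⊥ → N ⊓ LinearMap.range e2 ≠ ⊥) :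
    Nonempty (I1 ≃ₗ[Λ] I2) := by
  obtain ⟨φ, hφ⟩ := h2.out e1 inj1 e2
  have hφinj : Function.Injective φ := by
    rw [← LinearMap.ker_eq_bot]
    by_contra hk
    obtain ⟨x, hx, hx0⟩ := (Submodule.ne_bot_iff _).mp (ess1 _ hk)
    rw [Submodule.mem_inf] at hx
    obtain ⟨hxk, s, rfl⟩ := hx
    have he2 : e2 s = 0 := by rw [← hφ s]; exact LinearMap.mem_ker.mp hxk
    have hs : s = 0 := inj2 (by simpa using he2)
    exact hx0 (by rw [hs, map_zero])
  obtain ⟨r, hr⟩ := h1.out φ hφinj LinearMap.id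
  have hrinj : Function.Injective r := by
    rw [← LinearMap.ker_eq_bot]
    by_contra hk
    obtain ⟨x, hx, hx0⟩ := (Submodule.ne_bot_iff _).mp (ess2 _ hk)
    rw [Submodule.mem_inf] at hx
    obtain ⟨hxk, s, rfl⟩ := hx
    have hre : r (e2 s) = e1 s := by rw [← hφ s, hr]; rfl
    have he1 : e1 s = 0 := by rw [← hre]; exact LinearMap.mem_ker.mp hxk
    have hs : s = 0 := inj1 (by simpa using he1)
    exact hx0 (by rw [hs, map_zero])
  have hrsurj : Function.Surjective r := fun x => ⟨φ x, by rw [hr x]; rfl⟩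
  exact ⟨(LinearEquiv.ofBijective r ⟨hrinj, hrsurj⟩).symm⟩

lemma aux_ess {Λ A I0 : Type u} [Ring Λ] [AddCommGroup A] [Module Λ A]
    [AddCommGroup I0] [Module Λ I0] [IsAtomic (Submodule Λ A)]
    (K C : Submodule Λ A) (hCK : C ≤ K) (hCfull : K ⊓ socle Λ A ≤ C)
    (env : ↥K →ₗ[Λ] I0) (henv_inj : Function.Injective env)
    (hess : ∀ N : Submodule Λ I0, N ≠ ⊥ → N ⊓ LinearMap.range env ≠ ⊥)
    (N : Submodule Λ I0) (hN : N ≠ ⊥) :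
    N ⊓ LinearMap.range (env ∘ₗ Submodule.inclusion hCK) ≠ ⊥ := by
  obtain ⟨y, hy, hy0⟩ := (Submodule.ne_bot_iff _).mp (hess N hN)
  rw [Submodule.mem_inf] at hy
  obtain ⟨hyN, z, rfl⟩ := hy
  set Q : Submodule Λ ↥K := Submodule.comap env N with hQ
  have hzQ : z ∈ Q := hyN
  have hz0 : z ≠ 0 := fun h => hy0 (by rw [h, map_zero])
  set Q' : Submodule Λ A := Q.map K.subtype with hQ'
  have hQ'ne : Q' ≠ ⊥ := (Submodule.ne_bot_iff _).mpr
    ⟨(z : A), Submodule.mem_map_of_mem hzQ, fun h => hz0 (Subtype.ext h)⟩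
  obtain ⟨T, hatom, hTle⟩ := (IsAtomic.eq_bot_or_exists_atom_le Q').resolve_left hQ'ne
  obtain ⟨x, hxT, hx0⟩ := (Submodule.ne_bot_iff T).mp hatom.1
  have hxQ' : x ∈ Q' := hTle hxT
  obtain ⟨z', hz'Q, hz'x⟩ := hxQ'
  have hxK : x ∈ K := hz'x ▸ z'.2
  have hxsoc : x ∈ socle Λ A := (le_sSup hatom : T ≤ socle Λ A) hxT
  have hxC : x ∈ C := hCfull (Submodule.mem_inf.mpr ⟨hxK, hxsoc⟩)
  refine (Submodule.ne_bot_iff _).mpr ⟨env z', Submodule.mem_inf.mpr ⟨hz'Q, ?_⟩, ?_⟩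
  · refine ⟨⟨x, hxC⟩, ?_⟩
    have hincl : Submodule.inclusion hCK ⟨x, hxC⟩ = z' := Subtype.ext hz'x.symm
    rw [LinearMap.comp_apply, hincl]
  · intro h
    have hz'0 : z' = 0 := henv_inj (by rw [h, map_zero])
    exact hx0 (by rw [← hz'x, hz'0]; rfl)

/-- if `B` has no nonzero injective direct summands and `g − f` factors
through an injective module, then `Ker f ⊓ Soc A = Ker g ⊓ Soc A`, and the injective
envelopes of `Ker f` and `Ker g` are isomorphic. -/
theorem stmt8
    (k : Type u) [CommRing k] [IsArtinianRing k]
    (Λ : Type u) [Ring Λ] [Algebra k Λ] [Module.Finite k Λ]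
    (A B If Ig : Type u)
    [AddCommGroup A] [Module Λ A] [Module.Finite Λ A]
    [AddCommGroup B] [Module Λ B] [Module.Finite Λ B]
    [AddCommGroup If] [Module Λ If] [Module.Finite Λ If]
    [AddCommGroup Ig] [Module Λ Ig] [Module.Finite Λ Ig]
    (hB : ∀ N : Submodule Λ B, (∃ N' : Submodule Λ B, IsCompl N N') →
      Module.Injective Λ ↥N → N = ⊥)
    (f g : A →ₗ[Λ] B)
    (hfact : FactorsThroughInjective Λ (g - f))
    (envf : ↥(LinearMap.ker f) →ₗ[Λ] If) (henvf : IsInjectiveEnvelope Λ envf)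
    (envg : ↥(LinearMap.ker g) →ₗ[Λ] Ig) (henvg : IsInjectiveEnvelope Λ envg) :
    LinearMap.ker f ⊓ socle Λ A = LinearMap.ker g ⊓ socle Λ A ∧
      Nonempty (If ≃ₗ[Λ] Ig) := by
  obtain ⟨hartB, hnoeB⟩ := aux_chain (k := k) (Λ := Λ) (M := B)
  obtain ⟨hartA, hnoeA⟩ := aux_chain (k := k) (Λ := Λ) (M := A)
  haveI := hartB; haveI := hnoeB; haveI := hartA
  -- Part 1
  have key : ∀ f' g' : A →ₗ[Λ] B, FactorsThroughInjective Λ (g' - f') →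
      LinearMap.ker f' ⊓ socle Λ A ≤ LinearMap.ker g' ⊓ socle Λ A := by
    rintro f' g' ⟨J, iJ1, iJ2, hJ, p, q, hpq⟩
    have h1 : LinearMap.ker f' ⊓ socle Λ A ≤
        sSup {T : Submodule Λ A | IsAtom T ∧ T ≤ LinearMap.ker f' ⊓ socle Λ A} :=
      aux_socle_le _ inf_le_right
    refine h1.trans (sSup_le ?_)
    rintro T ⟨hatom, hle⟩
    have hTf : T ≤ LinearMap.ker f' := hle.trans inf_le_left
    exact le_inf (aux_atom_step hB hJ p q f' g' hpq T hatom hTf)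
      (le_sSup hatom : T ≤ socle Λ A)
  have hfact' : FactorsThroughInjective Λ (f - g) := by
    obtain ⟨J, iJ1, iJ2, hJ, p, q, hpq⟩ := hfact
    refine ⟨J, iJ1, iJ2, hJ, -p, q, ?_⟩
    refine LinearMap.ext fun a => ?_
    have h := LinearMap.ext_iff.mp hpq a
    simp only [LinearMap.sub_apply, LinearMap.comp_apply, LinearMap.neg_apply, map_neg] at h ⊢
    rw [← h]; abel
  have hEq : LinearMap.ker f ⊓ socle Λ A = LinearMap.ker g ⊓ socle Λ A :=
    le_antisymm (key f g hfact) (key g f hfact')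
  refine ⟨hEq, ?_⟩
  -- Part 2
  haveI : IsAtomic (Submodule Λ A) :=
    isAtomic_of_orderBot_wellFounded_lt ((isArtinian_iff Λ A).mp hartA)
  set C : Submodule Λ A := LinearMap.ker f ⊓ socle Λ A with hC
  have hCf : C ≤ LinearMap.ker f := inf_le_left
  have hCg : C ≤ LinearMap.ker g := hEq.le.trans inf_le_left
  set e1 : ↥C →ₗ[Λ] If := envf ∘ₗ Submodule.inclusion hCf with he1
  set e2 : ↥C →ₗ[Λ] Ig := envg ∘ₗ Submodule.inclusion hCg with he2
  have inj1 : Function.Injective e1 :=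
    henvf.2.1.comp (Submodule.inclusion_injective hCf)
  have inj2 : Function.Injective e2 :=
    henvg.2.1.comp (Submodule.inclusion_injective hCg)
  have ess1 : ∀ N : Submodule Λ If, N ≠ ⊥ → N ⊓ LinearMap.range e1 ≠ ⊥ :=
    aux_ess (LinearMap.ker f) C hCf le_rfl envf henvf.2.1 henvf.2.2
  have ess2 : ∀ N : Submodule Λ Ig, N ≠ ⊥ → N ⊓ LinearMap.range e2 ≠ ⊥ :=
    aux_ess (LinearMap.ker g) C hCg hEq.ge envg henvg.2.1 henvg.2.2
  exact aux_env_unique e1 e2 henvf.1 inj1 ess1 henvg.1 inj2 ess2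
end

section
/- Let Λ be an artin algebra and f, g : A → B morphisms of finitely generated Λ-modules, with B having no nonzero injective direct summands. Then Mimo(f) ≅ Mimo(g) in S(Λ) if and only if there exist automorphisms a of A and b of B such that f ∘ b − a ∘ g (compositions written left to right: a followed by g, f followed by b) factors through an injective Λ-module. -/
universe u

/-!
Write `m_f = (f, e_f) : A → B ⊕ I_f` for `Mimo(f)`. If `β : Mimo(f) ≅ Mimo(g)` has `B`-corner `b`
and `β⁻¹` has `B`-corner `b'`, the `B`-corner of `β⁻¹β = 1` says that `1 - b'b` factors through
`I_g`, and the commuting square says that `bf - gα` factors through `I_f`. Conversely, if `bf - ga`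
factors through an injective module, `(a, b)` extends along `m_f` and `m_g` to maps
`φ : B ⊕ I_f → B ⊕ I_g` and `ψ` back, whose composites fix the image of `Mimo` and have
`B`-corner `1` up to maps factoring through injectives.

Both directions thus rest on a Fitting-lemma argument: if `1 - c` factors through an injective
module, then `c` is nilpotent on the Fitting summand `ker cⁿ`, so `1 - c` is invertible there and
`ker cⁿ` is a retract of that injective module; as `B` has no injective summand, `c` is injective.
For `ψφ`, an injective `B`-corner together with the essential envelope `ker f → I_f` forces
injectivity. Everything has finite length, so injective endomorphisms are automorphisms.
-/

open LinearMap

theorem isArtinian_and_isNoetherian_of_finite (k : Type*) [CommRing k] [IsArtinianRing k]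
    (Λ : Type*) [Ring Λ] [Algebra k Λ] [Module.Finite k Λ] (M : Type*) [AddCommGroup M]
    [Module Λ M] [Module.Finite Λ M] : IsArtinian Λ M ∧ IsNoetherian Λ M := by
  have : IsArtinianRing Λ := isArtinian_of_tower k inferInstance
  have : IsNoetherianRing Λ := isNoetherian_of_tower k inferInstance
  exact ⟨inferInstance, inferInstance⟩

def Module.HasNoInjectiveSummand (Λ : Type u) [Ring Λ] (B : Type u) [AddCommGroup B]
    [Module Λ B] : Prop :=
  ∀ N : Submodule Λ B, (∃ N' : Submodule Λ B, IsCompl N N') → Module.Injective Λ N → N = ⊥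

def Submodule.IsEssential {Λ : Type u} [Ring Λ] {M : Type u} [AddCommGroup M] [Module Λ M]
    (N : Submodule Λ M) : Prop :=
  ∀ L : Submodule Λ M, L ≠ ⊥ → L ⊓ N ≠ ⊥

section

variable {Λ : Type u} [Ring Λ] {A B M N : Type u} [AddCommGroup A] [Module Λ A]
  [AddCommGroup B] [Module Λ B] [AddCommGroup M] [Module Λ M] [AddCommGroup N] [Module Λ N]

theorem FactorsThroughInjective.comp {C : Type u} [AddCommGroup C] [Module Λ C] {h : B →ₗ[Λ] C}
    (hh : FactorsThroughInjective Λ h) (v : A →ₗ[Λ] B) : FactorsThroughInjective Λ (h ∘ₗ v) := by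
  obtain ⟨I, _, _, hI, p, q, rfl⟩ := hh
  exact ⟨I, _, _, hI, p ∘ₗ v, q, rfl⟩

theorem Module.Injective.of_retract_s10 {K I : Type u} [AddCommGroup K] [Module Λ K]
    [AddCommGroup I] [Module Λ I] [Module.Injective Λ I] (i : K →ₗ[Λ] I) (ρ : I →ₗ[Λ] K)
    (hρi : ρ ∘ₗ i = LinearMap.id) : Module.Injective Λ K where
  out _ _ _ _ _ _ m hm g := by
    obtain ⟨h, hh⟩ := Module.Injective.extension_property Λ I _ _ m hm (i ∘ₗ g)
    refine ⟨ρ ∘ₗ h, LinearMap.congr_fun (?_ : (ρ ∘ₗ h) ∘ₗ m = g)⟩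
    rw [comp_assoc, hh, ← comp_assoc, hρi, id_comp]

theorem Module.Injective.of_bijective_comp_factorsThroughInjective {K : Type u}
    [AddCommGroup K] [Module Λ K] (j : K →ₗ[Λ] B) (π : B →ₗ[Λ] K) {h : Module.End Λ B}
    (hh : FactorsThroughInjective Λ h)
    (hbij : Function.Bijective (π ∘ₗ h ∘ₗ j)) : Module.Injective Λ K := by
  obtain ⟨I, _, _, _, p, q, rfl⟩ := hh
  let e := LinearEquiv.ofBijective _ hbij
  refine Module.Injective.of_retract_s10 (p ∘ₗ j) (e.symm.toLinearMap ∘ₗ π ∘ₗ q) ?_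
  ext x
  exact e.symm_apply_apply x

theorem injective_of_factorsThroughInjective_id_sub [IsArtinian Λ B] [IsNoetherian Λ B]
    (hB : Module.HasNoInjectiveSummand Λ B) {c : Module.End Λ B}
    (hc : FactorsThroughInjective Λ (LinearMap.id - c)) : Function.Injective c := by
  obtain ⟨n, hn⟩ := Filter.eventually_atTop.mp c.eventually_isCompl_ker_pow_range_pow
  have hcompl := hn (n + 1) n.le_succ
  set K := ker (c ^ (n + 1))
  have hcK : ∀ x ∈ K, c x ∈ K := fun x hx => by
    rw [mem_ker, ← Module.End.mul_apply, ← (Commute.self_pow c _).eq, Module.End.mul_apply, hx,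
      map_zero]
  have hnil : IsNilpotent (c.restrict hcK) :=
    ⟨n + 1, by ext x; rw [Module.End.pow_restrict]; exact x.2⟩
  have hcompress : K.projectionOnto _ hcompl ∘ₗ (LinearMap.id - c) ∘ₗ K.subtype =
      1 - c.restrict hcK := by
    ext x
    exact congrArg Subtype.val (Submodule.projectionOnto_apply_left hcompl (x - c.restrict hcK x))
  have hK : K = ⊥ := hB K ⟨_, hcompl⟩ <|
    Module.Injective.of_bijective_comp_factorsThroughInjective _ _ hc <| by
      rw [hcompress]; exact (Module.End.isUnit_iff _).mp hnil.isUnit_one_sub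
  rw [← ker_eq_bot, eq_bot_iff, ← hK]
  simpa only [K, pow_succ, Module.End.mul_eq_comp] using ker_le_ker_comp c (c ^ n)

theorem injective_of_fixes_isEssential {χ : Module.End Λ (B × M)} {S : Submodule Λ M}
    (hS : S.IsEssential) (hfix : ∀ m ∈ S, χ (0, m) = (0, m))
    (hc : Function.Injective (fst Λ B M ∘ₗ χ ∘ₗ inl Λ B M)) : Function.Injective χ := by
  have hsplit : ∀ y m, χ (y, m) = χ (y, 0) + χ (0, m) := fun y m => by
    rw [← map_add, Prod.mk_add_mk, add_zero, zero_add]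
  have hfst : ∀ y, (χ (y, 0)).1 = 0 → y = 0 := fun y hy => hc (by rw [map_zero]; simpa using hy)
  -- `(y, m) ∈ ker χ` with `m ∈ S` gives `χ (y, 0) = (0, -m)`, so `y = 0` by `hc`, and then `m = 0`
  have hL : (ker χ).map (snd Λ B M) = ⊥ := by
    by_contra hne
    obtain ⟨m, hm, hm0⟩ := (Submodule.ne_bot_iff _).mp (hS _ hne)
    obtain ⟨⟨⟨y, m⟩, hker, rfl⟩, hmS⟩ := Submodule.mem_inf.mp hm
    have h0 : χ (y, 0) + (0, m) = 0 := by rw [← hfix m hmS, ← hsplit]; exact hker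
    obtain rfl := hfst y (by simpa using congrArg Prod.fst h0)
    exact hm0 (by simpa [Prod.mk_zero_zero] using congrArg Prod.snd h0)
  rw [← ker_eq_bot, eq_bot_iff]
  rintro ⟨y, m⟩ hker
  obtain rfl : m = 0 := by
    simpa [hL] using Submodule.mem_map_of_mem (f := snd Λ B M) hker
  obtain rfl := hfst y (by simpa using congrArg Prod.fst (mem_ker.mp hker))
  rfl

theorem injective_prod_of_injective_comp_ker_subtype {f : A →ₗ[Λ] B} {e : A →ₗ[Λ] M}
    (he : Function.Injective (e ∘ₗ (ker f).subtype)) : Function.Injective (f.prod e) := by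
  rw [← ker_eq_bot, ker_prod, eq_bot_iff]
  rintro x ⟨hfx, hex⟩
  simpa using he (a₁ := ⟨x, hfx⟩) (a₂ := 0) (by simpa using hex)

theorem bijective_of_comp_prod_eq_self [IsArtinian Λ B] [IsNoetherian Λ B] [IsArtinian Λ M]
    (hB : Module.HasNoInjectiveSummand Λ B) {f : A →ₗ[Λ] B} {e : A →ₗ[Λ] M}
    (hess : (range (e ∘ₗ (ker f).subtype)).IsEssential) {χ : Module.End Λ (B × M)}
    (hχ : χ ∘ₗ f.prod e = f.prod e)
    (hfst : FactorsThroughInjective Λ (fst Λ B M - fst Λ B M ∘ₗ χ)) : Function.Bijective χ := by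
  refine IsArtinian.bijective_of_injective_endomorphism χ
    (injective_of_fixes_isEssential hess ?_ ?_)
  · rintro _ ⟨⟨x, hx⟩, rfl⟩
    simpa [mem_ker.mp hx] using LinearMap.congr_fun hχ x
  · refine injective_of_factorsThroughInjective_id_sub hB ?_
    simpa [sub_comp, comp_assoc] using hfst.comp (inl Λ B M)

theorem exists_comp_prod_eq_of_sub_eq {I : Type u} [AddCommGroup I] [Module Λ I]
    [Module.Injective Λ I] [Module.Injective Λ N] {f g : A →ₗ[Λ] B} {e : A →ₗ[Λ] M}
    (hfe : Function.Injective (f.prod e)) (e' : A →ₗ[Λ] N) {a : A →ₗ[Λ] A} {b : Module.End Λ B}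
    {q : I →ₗ[Λ] B} {p : A →ₗ[Λ] I} (h : b ∘ₗ f - g ∘ₗ a = q ∘ₗ p) :
    ∃ (φ : B × M →ₗ[Λ] B × N) (P : B × M →ₗ[Λ] I),
      φ ∘ₗ f.prod e = g.prod e' ∘ₗ a ∧ fst Λ B N ∘ₗ φ = b ∘ₗ fst Λ B M - q ∘ₗ P := by
  obtain ⟨P, hP⟩ := Module.Injective.extension_property Λ I _ _ _ hfe p
  obtain ⟨φ₂, hφ₂⟩ := Module.Injective.extension_property Λ N _ _ _ hfe (e' ∘ₗ a)
  refine ⟨(b ∘ₗ fst Λ B M - q ∘ₗ P).prod φ₂, P, ?_, fst_prod _ _⟩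
  rw [prod_comp, prod_comp, hφ₂, sub_comp, comp_assoc, fst_prod, comp_assoc, hP, ← h,
    sub_sub_cancel]

theorem fst_sub_fst_comp_comp {M' I : Type u} [AddCommGroup M'] [Module Λ M']
    [AddCommGroup I] [Module Λ I] {φ : B × M →ₗ[Λ] B × N} {ψ : B × N →ₗ[Λ] B × M'}
    {b b' : Module.End Λ B} {q q' : I →ₗ[Λ] B} {P : B × M →ₗ[Λ] I} {P' : B × N →ₗ[Λ] I}
    (hφ : fst Λ B N ∘ₗ φ = b ∘ₗ fst Λ B M - q ∘ₗ P)
    (hψ : fst Λ B M' ∘ₗ ψ = b' ∘ₗ fst Λ B N - q' ∘ₗ P')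
    (hb : b' ∘ₗ b = LinearMap.id) (hq : b' ∘ₗ q = q') :
    fst Λ B M - fst Λ B M' ∘ₗ ψ ∘ₗ φ = q' ∘ₗ (P + P' ∘ₗ φ) := by
  rw [← comp_assoc, hψ, sub_comp, comp_assoc, hφ, comp_sub, ← comp_assoc, hb, ← comp_assoc, hq,
    id_comp, comp_add, comp_assoc]
  abel

theorem exists_factorsThroughInjective_sub_of_comp_prod_eq [IsArtinian Λ B] [IsNoetherian Λ B]
    [Module.Injective Λ M] [Module.Injective Λ N] (hB : Module.HasNoInjectiveSummand Λ B)
    {f g : A →ₗ[Λ] B} {e : A →ₗ[Λ] M} {e' : A →ₗ[Λ] N} {α : A →ₗ[Λ] A} (β : (B × M) ≃ₗ[Λ] (B × N))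
    (hβ : (β : B × M →ₗ[Λ] B × N) ∘ₗ f.prod e = g.prod e' ∘ₗ α) :
    ∃ b : B ≃ₗ[Λ] B, FactorsThroughInjective Λ ((b : B →ₗ[Λ] B) ∘ₗ f - g ∘ₗ α) := by
  set b := fst Λ B N ∘ₗ (β : B × M →ₗ[Λ] B × N) ∘ₗ inl Λ B M
  have hb'b : LinearMap.id - (fst Λ B M ∘ₗ (β.symm : B × N →ₗ[Λ] B × M) ∘ₗ inl Λ B N) ∘ₗ b =
      (fst Λ B M ∘ₗ (β.symm : B × N →ₗ[Λ] B × M) ∘ₗ inr Λ B N) ∘ₗ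
        (snd Λ B N ∘ₗ (β : B × M →ₗ[Λ] B × N) ∘ₗ inl Λ B M) := by
    ext y
    have hy : (β.symm ((β (y, 0)).1, 0)).1 + (β.symm (0, (β (y, 0)).2)).1 = y := by
      rw [← Prod.fst_add, ← map_add, Prod.mk_add_mk, add_zero, zero_add, β.symm_apply_apply]
    simp only [LinearMap.sub_apply, id_coe, id_eq, coe_comp, coe_fst, LinearEquiv.coe_coe, coe_inl,
      Function.comp_apply, coe_inr, coe_snd, b]
    exact sub_eq_of_eq_add' hy.symm
  have hbinj : Function.Injective b := by
    have h := injective_of_factorsThroughInjective_id_sub hB ⟨N, _, _, inferInstance, _, _, hb'b⟩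
    rw [coe_comp] at h
    exact h.of_comp
  refine ⟨LinearEquiv.ofBijective b (IsArtinian.bijective_of_injective_endomorphism b hbinj),
    M, _, _, inferInstance, e, -(fst Λ B N ∘ₗ (β : B × M →ₗ[Λ] B × N) ∘ₗ inr Λ B M), ?_⟩
  ext x
  have hx : (β (f x, 0)).1 + (β (0, e x)).1 = g (α x) := by
    rw [← Prod.fst_add, ← map_add, Prod.mk_add_mk, add_zero, zero_add]
    exact congrArg Prod.fst (LinearMap.congr_fun hβ x)
  simp only [LinearMap.sub_apply, coe_comp, LinearEquiv.coe_coe, Function.comp_apply,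
    LinearEquiv.ofBijective_apply, coe_fst, coe_inl, neg_comp, LinearMap.neg_apply, coe_inr, b]
  rw [← hx]
  abel

theorem exists_equiv_comp_prod_eq_of_factorsThroughInjective_sub [IsArtinian Λ B]
    [IsNoetherian Λ B] [IsArtinian Λ M] [IsArtinian Λ N] [Module.Injective Λ M]
    [Module.Injective Λ N] (hB : Module.HasNoInjectiveSummand Λ B) {f g : A →ₗ[Λ] B}
    {e : A →ₗ[Λ] M} {e' : A →ₗ[Λ] N} (hfe : Function.Injective (f.prod e))
    (hge : Function.Injective (g.prod e')) (hfe_ess : (range (e ∘ₗ (ker f).subtype)).IsEssential)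
    (hge_ess : (range (e' ∘ₗ (ker g).subtype)).IsEssential) (a : A ≃ₗ[Λ] A) (b : B ≃ₗ[Λ] B)
    (h : FactorsThroughInjective Λ ((b : B →ₗ[Λ] B) ∘ₗ f - g ∘ₗ (a : A →ₗ[Λ] A))) :
    ∃ β : (B × M) ≃ₗ[Λ] (B × N),
      (β : B × M →ₗ[Λ] B × N) ∘ₗ f.prod e = g.prod e' ∘ₗ (a : A →ₗ[Λ] A) := by
  obtain ⟨I, _, _, _, p, q, hqp⟩ := h
  obtain ⟨φ, P, hφ, hφfst⟩ := exists_comp_prod_eq_of_sub_eq hfe e' hqp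
  have hqp' : (b.symm : B →ₗ[Λ] B) ∘ₗ g - f ∘ₗ (a.symm : A →ₗ[Λ] A) =
      ((b.symm : B →ₗ[Λ] B) ∘ₗ q) ∘ₗ (-(p ∘ₗ (a.symm : A →ₗ[Λ] A))) := by
    ext x
    have := LinearMap.congr_fun hqp (a.symm x)
    simp only [LinearMap.sub_apply, coe_comp, LinearEquiv.coe_coe, Function.comp_apply,
      LinearEquiv.apply_symm_apply, comp_neg, LinearMap.neg_apply] at this ⊢
    rw [← this]
    simp
  obtain ⟨ψ, P', hψ, hψfst⟩ := exists_comp_prod_eq_of_sub_eq hge e hqp'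
  have hψφ : Function.Bijective (ψ ∘ₗ φ) := by
    refine bijective_of_comp_prod_eq_self hB hfe_ess ?_
      ⟨I, _, _, inferInstance, _, _, fst_sub_fst_comp_comp hφfst hψfst b.symm_comp rfl⟩
    rw [comp_assoc, hφ, ← comp_assoc, hψ, comp_assoc, a.symm_comp, comp_id]
  have hφψ : Function.Bijective (φ ∘ₗ ψ) := by
    refine bijective_of_comp_prod_eq_self hB hge_ess ?_
      ⟨I, _, _, inferInstance, _, _, fst_sub_fst_comp_comp hψfst hφfst b.comp_symm
        (by rw [← comp_assoc, b.comp_symm, id_comp])⟩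
    rw [comp_assoc, hψ, ← comp_assoc, hφ, comp_assoc, a.comp_symm, comp_id]
  rw [coe_comp] at hψφ hφψ
  exact ⟨.ofBijective φ ⟨hψφ.1.of_comp, hφψ.2.of_comp⟩, hφ⟩

end

theorem stmt10_general
    (k : Type u) [CommRing k] [IsArtinianRing k]
    (Λ : Type u) [Ring Λ] [Algebra k Λ] [Module.Finite k Λ]
    (A B If Ig : Type u)
    [AddCommGroup A] [Module Λ A]
    [AddCommGroup B] [Module Λ B] [Module.Finite Λ B]
    [AddCommGroup If] [Module Λ If] [Module.Finite Λ If]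
    [AddCommGroup Ig] [Module Λ Ig] [Module.Finite Λ Ig]
    (hB : ∀ N : Submodule Λ B, (∃ N' : Submodule Λ B, IsCompl N N') →
      Module.Injective Λ ↥N → N = ⊥)
    (f g : A →ₗ[Λ] B)
    (envf : ↥(LinearMap.ker f) →ₗ[Λ] If) (henvf : IsInjectiveEnvelope Λ envf)
    (ef : A →ₗ[Λ] If) (hef : ef ∘ₗ (LinearMap.ker f).subtype = envf)
    (envg : ↥(LinearMap.ker g) →ₗ[Λ] Ig) (henvg : IsInjectiveEnvelope Λ envg)
    (eg : A →ₗ[Λ] Ig) (heg : eg ∘ₗ (LinearMap.ker g).subtype = envg) :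
    (∃ (α : A ≃ₗ[Λ] A) (β : (B × If) ≃ₗ[Λ] (B × Ig)),
      (β : (B × If) →ₗ[Λ] (B × Ig)) ∘ₗ (f.prod ef) =
        (g.prod eg) ∘ₗ (α : A →ₗ[Λ] A)) ↔
    (∃ (a : A ≃ₗ[Λ] A) (b : B ≃ₗ[Λ] B),
      FactorsThroughInjective Λ
        ((b : B →ₗ[Λ] B) ∘ₗ f - g ∘ₗ (a : A →ₗ[Λ] A))) := by
  obtain ⟨_, _⟩ := isArtinian_and_isNoetherian_of_finite k Λ B
  have := (isArtinian_and_isNoetherian_of_finite k Λ If).1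
  have := (isArtinian_and_isNoetherian_of_finite k Λ Ig).1
  obtain ⟨_, hinjf, hessf⟩ := henvf
  obtain ⟨_, hinjg, hessg⟩ := henvg
  subst hef heg
  exact ⟨fun ⟨α, β, hβ⟩ => ⟨α, exists_factorsThroughInjective_sub_of_comp_prod_eq hB β hβ⟩,
    fun ⟨a, b, h⟩ => ⟨a, exists_equiv_comp_prod_eq_of_factorsThroughInjective_sub hB
      (injective_prod_of_injective_comp_ker_subtype hinjf)
      (injective_prod_of_injective_comp_ker_subtype hinjg) hessf hessg a b h⟩⟩

/-- if `B` has no nonzero injective direct summands, then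
`Mimo(f) ≅ Mimo(g)` in `S(Λ)` if and only if there are automorphisms `a` of `A` and
`b` of `B` such that `b ∘ f − g ∘ a` factors through an injective module. -/
theorem stmt10
    (k : Type u) [CommRing k] [IsArtinianRing k]
    (Λ : Type u) [Ring Λ] [Algebra k Λ] [Module.Finite k Λ]
    (A B If Ig : Type u)
    [AddCommGroup A] [Module Λ A] [Module.Finite Λ A]
    [AddCommGroup B] [Module Λ B] [Module.Finite Λ B]
    [AddCommGroup If] [Module Λ If] [Module.Finite Λ If]
    [AddCommGroup Ig] [Module Λ Ig] [Module.Finite Λ Ig]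
    (hB : ∀ N : Submodule Λ B, (∃ N' : Submodule Λ B, IsCompl N N') →
      Module.Injective Λ ↥N → N = ⊥)
    (f g : A →ₗ[Λ] B)
    (envf : ↥(LinearMap.ker f) →ₗ[Λ] If) (henvf : IsInjectiveEnvelope Λ envf)
    (ef : A →ₗ[Λ] If) (hef : ef ∘ₗ (LinearMap.ker f).subtype = envf)
    (envg : ↥(LinearMap.ker g) →ₗ[Λ] Ig) (henvg : IsInjectiveEnvelope Λ envg)
    (eg : A →ₗ[Λ] Ig) (heg : eg ∘ₗ (LinearMap.ker g).subtype = envg) :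
    (∃ (α : A ≃ₗ[Λ] A) (β : (B × If) ≃ₗ[Λ] (B × Ig)),
      (β : (B × If) →ₗ[Λ] (B × Ig)) ∘ₗ (f.prod ef) =
        (g.prod eg) ∘ₗ (α : A →ₗ[Λ] A)) ↔
    (∃ (a : A ≃ₗ[Λ] A) (b : B ≃ₗ[Λ] B),
      FactorsThroughInjective Λ
        ((b : B →ₗ[Λ] B) ∘ₗ f - g ∘ₗ (a : A →ₗ[Λ] A))) :=
  stmt10_general k Λ A B If Ig hB f g envf henvf ef hef envg henvg eg heg
end

section
/- Let Λ be an artin algebra and I an indecomposable injective Λ-module. Then the objects (1_I : I → I) and (0 → I) of the submodule category S(Λ) are relatively injective: every short exact sequence in S(Λ) (exact in both components) starting at (1_I : I → I) or at (0 → I) splits. -/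
universe u

/-- A short exact sequence `0 → a → b → c → 0` in `S(Λ)`: the objects `a, b, c` are
monomorphisms, the morphisms `(i', i) : a → b` and `(p', p) : b → c` are commutative
squares, and both component sequences of modules are short exact. -/
def IsSESinS (Λ : Type u) [Ring Λ] {A' A B' B C' C : Type u}
    [AddCommGroup A'] [Module Λ A'] [AddCommGroup A] [Module Λ A]
    [AddCommGroup B'] [Module Λ B'] [AddCommGroup B] [Module Λ B]
    [AddCommGroup C'] [Module Λ C'] [AddCommGroup C] [Module Λ C]
    (a : A' →ₗ[Λ] A) (b : B' →ₗ[Λ] B) (c : C' →ₗ[Λ] C)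
    (i' : A' →ₗ[Λ] B') (i : A →ₗ[Λ] B) (p' : B' →ₗ[Λ] C') (p : B →ₗ[Λ] C) : Prop :=
  Function.Injective a ∧ Function.Injective b ∧ Function.Injective c ∧
  b ∘ₗ i' = i ∘ₗ a ∧ c ∘ₗ p' = p ∘ₗ b ∧
  Function.Injective i' ∧ Function.Injective i ∧
  Function.Surjective p' ∧ Function.Surjective p ∧
  LinearMap.ker p' = LinearMap.range i' ∧ LinearMap.ker p = LinearMap.range i

/-- for an indecomposable injective `Λ`-module `I`, the objects
`(1_I : I → I)` and `(0 → I)` of `S(Λ)` are relatively injective: every short exact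
sequence in `S(Λ)` starting at them splits. -/
theorem stmt12
    (k : Type u) [CommRing k] [IsArtinianRing k]
    (Λ : Type u) [Ring Λ] [Algebra k Λ] [Module.Finite k Λ]
    (I : Type u) [AddCommGroup I] [Module Λ I] [Module.Finite Λ I]
    [Nontrivial I] (hinj : Module.Injective Λ I)
    (hind : ∀ u : I →ₗ[Λ] I, u ∘ₗ u = u → u = 0 ∨ u = LinearMap.id) :
    -- every short exact sequence in S(Λ) starting at (1_I : I → I) splits
    (∀ (B' B C' C : Type u)
        [AddCommGroup B'] [Module Λ B'] [Module.Finite Λ B']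
        [AddCommGroup B] [Module Λ B] [Module.Finite Λ B]
        [AddCommGroup C'] [Module Λ C'] [Module.Finite Λ C']
        [AddCommGroup C] [Module Λ C] [Module.Finite Λ C]
        (b : B' →ₗ[Λ] B) (c : C' →ₗ[Λ] C)
        (i' : I →ₗ[Λ] B') (i : I →ₗ[Λ] B)
        (p' : B' →ₗ[Λ] C') (p : B →ₗ[Λ] C),
        IsSESinS Λ (LinearMap.id : I →ₗ[Λ] I) b c i' i p' p →
        ∃ (r' : B' →ₗ[Λ] I) (r : B →ₗ[Λ] I),
          (LinearMap.id : I →ₗ[Λ] I) ∘ₗ r' = r ∘ₗ b ∧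
          r' ∘ₗ i' = LinearMap.id ∧ r ∘ₗ i = LinearMap.id) ∧
    -- every short exact sequence in S(Λ) starting at (0 → I) splits
    (∀ (B' B C' C : Type u)
        [AddCommGroup B'] [Module Λ B'] [Module.Finite Λ B']
        [AddCommGroup B] [Module Λ B] [Module.Finite Λ B]
        [AddCommGroup C'] [Module Λ C'] [Module.Finite Λ C']
        [AddCommGroup C] [Module Λ C] [Module.Finite Λ C]
        (b : B' →ₗ[Λ] B) (c : C' →ₗ[Λ] C)
        (i' : PUnit.{u+1} →ₗ[Λ] B') (i : I →ₗ[Λ] B)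
        (p' : B' →ₗ[Λ] C') (p : B →ₗ[Λ] C),
        IsSESinS Λ (0 : PUnit.{u+1} →ₗ[Λ] I) b c i' i p' p →
        ∃ (r' : B' →ₗ[Λ] PUnit.{u+1}) (r : B →ₗ[Λ] I),
          (0 : PUnit.{u+1} →ₗ[Λ] I) ∘ₗ r' = r ∘ₗ b ∧
          r' ∘ₗ i' = LinearMap.id ∧ r ∘ₗ i = LinearMap.id) := by
  constructor
  · intro B' B C' C _ _ _ _ _ _ _ _ _ _ _ _ b c i' i p' p hses
    obtain ⟨ha, hb, hc, hsq1, hsq2, hi', hi, hp', hp, hker', hker⟩ := hses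
    obtain ⟨r, hr⟩ := hinj.out i hi LinearMap.id
    refine ⟨r ∘ₗ b, r, ?_, ?_, ?_⟩
    · rfl
    · ext x
      have : b (i' x) = i x := by
        have := congrArg (fun f => f x) hsq1
        simpa using this
      simp [this, hr x]
    · ext x; simp [hr x]
  · intro B' B C' C _ _ _ _ _ _ _ _ _ _ _ _ b c i' i p' p hses
    obtain ⟨ha, hb, hc, hsq1, hsq2, hi', hi, hp', hp, hker', hker⟩ := hses
    -- the map (x, y) ↦ b x + i y is injective
    set φ : (B' × I) →ₗ[Λ] B := b ∘ₗ LinearMap.fst Λ B' I + i ∘ₗ LinearMap.snd Λ B' I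
    have hφ : Function.Injective φ := by
      rw [← LinearMap.ker_eq_bot, LinearMap.ker_eq_bot']
      rintro ⟨x, y⟩ h0
      have hxy : b x + i y = 0 := h0
      have hpx : p (b x) = 0 := by
        have : i y ∈ LinearMap.ker p := by rw [hker]; exact ⟨y, rfl⟩
        have hy : p (i y) = 0 := this
        have : p (b x + i y) = 0 := by rw [hxy]; simp
        simpa [map_add, hy] using this
      have hpx' : p' x = 0 := by
        have : c (p' x) = 0 := by
          have := congrArg (fun f => f x) hsq2
          simp only [LinearMap.comp_apply] at this
          rw [this, hpx]
        exact hc (by simpa using this)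
      have : x ∈ LinearMap.range i' := by rw [← hker']; exact hpx'
      obtain ⟨u, hu⟩ := this
      have hx0 : x = 0 := by
        have hbx : b x = 0 := by
          rw [← hu]
          have := congrArg (fun f => f u) hsq1
          simp only [LinearMap.comp_apply] at this
          rw [this]; simp
        exact hb (by simpa using hbx)
      have hy0 : y = 0 := by
        have : i y = 0 := by rw [hx0] at hxy; simpa using hxy
        exact hi (by simpa using this)
      simp [hx0, hy0, Prod.ext_iff]
    obtain ⟨r, hr⟩ := hinj.out φ hφ (LinearMap.snd Λ B' I)
    refine ⟨0, r, ?_, ?_, ?_⟩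
    · ext x
      have : r (b x) = 0 := by
        have := hr (x, 0)
        simpa [φ] using this
      simp [this]
    · ext x
    · ext y
      have := hr (0, y)
      simpa [φ] using this
end

section
/- Let Λ be a commutative uniserial artinian ring of Loewy length 2 (so the maximal ideal m satisfies m² = 0, m ≠ 0), generated as an ideal by an element m₀. Let f = 1 : Λ → Λ and g = (multiplication by m₀) : Λ → Λ. Then g − f factors through an injective Λ-module, yet Mimo(f) and Mimo(g) are not isomorphic in S(Λ): indeed Mimo(f) = (1 : Λ → Λ) while Mimo(g) ≅ (1 : Λ → Λ) ⊕ (0 → Λ), and these have non-isomorphic targets of differing lengths. -/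
universe u

/-- for `Λ` a commutative uniserial (local artinian) ring of Loewy length 2
with maximal ideal `m = (m₀)`, `m² = 0`, `m ≠ 0`, the maps `f = 1 : Λ → Λ` and
`g = (·m₀) : Λ → Λ` differ by a map factoring through an injective module, yet
`Mimo(f) = (1 : Λ → Λ)` and `Mimo(g) ≅ (1 : Λ → Λ) ⊕ (0 → Λ)` are not isomorphic
in `S(Λ)`. -/
theorem stmt16
    (Λ : Type u) [CommRing Λ] [IsArtinianRing Λ] [IsLocalRing Λ]
    (m₀ : Λ)
    (hgen : IsLocalRing.maximalIdeal Λ = Ideal.span {m₀})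
    (hm2 : (IsLocalRing.maximalIdeal Λ) ^ 2 = ⊥)
    (hm : IsLocalRing.maximalIdeal Λ ≠ ⊥)
    (g : Λ →ₗ[Λ] Λ) (hg : ∀ x : Λ, g x = m₀ * x)
    (Ig : Type u) [AddCommGroup Ig] [Module Λ Ig] [Module.Finite Λ Ig]
    (envg : ↥(LinearMap.ker g) →ₗ[Λ] Ig) (henvg : IsInjectiveEnvelope Λ envg)
    (eg : Λ →ₗ[Λ] Ig) (heg : eg ∘ₗ (LinearMap.ker g).subtype = envg) :
    -- g − 1 factors through an injective module
    FactorsThroughInjective Λ (g - LinearMap.id) ∧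
    -- Mimo(g) ≅ (1 : Λ → Λ) ⊕ (0 → Λ)
    (∃ (α : Λ ≃ₗ[Λ] Λ) (β : (Λ × Ig) ≃ₗ[Λ] (Λ × Λ)),
      (β : (Λ × Ig) →ₗ[Λ] (Λ × Λ)) ∘ₗ (g.prod eg) =
        ((LinearMap.id : Λ →ₗ[Λ] Λ).prod 0) ∘ₗ (α : Λ →ₗ[Λ] Λ)) ∧
    -- Mimo(f) = (1 : Λ → Λ) and Mimo(g) are not isomorphic in S(Λ)
    ¬ ∃ (α : Λ ≃ₗ[Λ] Λ) (β : Λ ≃ₗ[Λ] (Λ × Ig)),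
      (β : Λ →ₗ[Λ] (Λ × Ig)) ∘ₗ (LinearMap.id : Λ →ₗ[Λ] Λ) =
        (g.prod eg) ∘ₗ (α : Λ →ₗ[Λ] Λ) := by
  classical
  -- basic facts about m₀
  have hm₀ne : m₀ ≠ 0 := by
    intro h
    exact hm (by rw [hgen, h, Ideal.span_singleton_eq_bot.mpr rfl])
  have hm₀mem : m₀ ∈ IsLocalRing.maximalIdeal Λ := by
    rw [hgen]; exact Ideal.mem_span_singleton_self m₀
  have hm₀sq : m₀ * m₀ = 0 := by
    have h : m₀ * m₀ ∈ (IsLocalRing.maximalIdeal Λ) ^ 2 := by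
      rw [pow_two]; exact Ideal.mul_mem_mul hm₀mem hm₀mem
    rw [hm2] at h; simpa using h
  -- every nonzero ideal contains m₀
  have hideal : ∀ (J : Ideal Λ), J ≠ ⊥ → m₀ ∈ J := by
    intro J hJ
    obtain ⟨x, hxJ, hx0⟩ := Submodule.exists_mem_ne_zero_of_ne_bot hJ
    by_cases hu : IsUnit x
    · obtain ⟨u, rfl⟩ := hu
      have h2 : (m₀ * ↑u⁻¹) • (u : Λ) ∈ J := J.smul_mem _ hxJ
      simpa [smul_eq_mul, mul_assoc, Units.inv_mul] using h2
    · have hxm : x ∈ IsLocalRing.maximalIdeal Λ := hu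
      rw [hgen, Ideal.mem_span_singleton] at hxm
      obtain ⟨c, rfl⟩ := hxm
      by_cases hc : IsUnit c
      · obtain ⟨v, rfl⟩ := hc
        have h2 : ((↑v⁻¹ : Λ)) • (m₀ * ↑v) ∈ J := J.smul_mem _ hxJ
        simpa [smul_eq_mul, mul_left_comm, Units.inv_mul] using h2
      · exfalso
        have hcm : c ∈ IsLocalRing.maximalIdeal Λ := hc
        rw [hgen, Ideal.mem_span_singleton] at hcm
        obtain ⟨d, rfl⟩ := hcm
        exact hx0 (by rw [← mul_assoc, hm₀sq, zero_mul])
  -- Λ is self-injective, via Baer's criterion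
  have hBaer : Module.Baer Λ Λ := by
    intro I φ
    by_cases hItop : I = ⊤
    · subst hItop
      exact ⟨φ ∘ₗ LinearMap.codRestrict ⊤ LinearMap.id (fun x => trivial),
        fun x mem => rfl⟩
    by_cases hIbot : I = ⊥
    · subst hIbot
      refine ⟨0, fun x mem => ?_⟩
      have hx : x = 0 := by simpa using mem
      subst hx
      have : (⟨(0:Λ), mem⟩ : ((⊥ : Ideal Λ) : Type u)) = 0 := rfl
      simp [this]
    · have hm₀I : m₀ ∈ I := hideal I hIbot
      set y := φ ⟨m₀, hm₀I⟩ with hy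
      have hsm : (m₀ • (⟨m₀, hm₀I⟩ : I)) = 0 := by
        apply Subtype.ext
        simpa [smul_eq_mul] using hm₀sq
      have hmy : m₀ * y = 0 := by
        have : φ (m₀ • (⟨m₀, hm₀I⟩ : I)) = 0 := by rw [hsm, map_zero]
        rw [map_smul, smul_eq_mul] at this
        exact this
      have hynu : ¬ IsUnit y := by
        intro hu
        obtain ⟨v, hv⟩ := hu
        apply hm₀ne
        have : m₀ * (y * ↑v⁻¹) = 0 := by rw [← mul_assoc, hmy, zero_mul]
        rwa [← hv, Units.mul_inv, mul_one] at this
      obtain ⟨c, hc⟩ : ∃ c, y = m₀ * c := by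
        have : y ∈ Ideal.span {m₀} := by
          rw [← hgen]; exact hynu
        exact Ideal.mem_span_singleton.mp this
      refine ⟨c • LinearMap.id, fun x mem => ?_⟩
      have hxm : x ∈ Ideal.span {m₀} := by
        rw [← hgen]; exact IsLocalRing.le_maximalIdeal hItop mem
      obtain ⟨d, hd⟩ := Ideal.mem_span_singleton.mp hxm
      have hsub : (⟨x, mem⟩ : I) = d • (⟨m₀, hm₀I⟩ : I) := by
        apply Subtype.ext
        simp [smul_eq_mul, hd, mul_comm]
      rw [hsub, map_smul, smul_eq_mul, ← hy, hc]
      simp [smul_eq_mul, hd]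
      ring
  have hinjΛ : Module.Injective Λ Λ := hBaer.injective
  have hmkg : m₀ ∈ LinearMap.ker g := by rw [LinearMap.mem_ker, hg]; exact hm₀sq
  -- eg is injective
  have heginj : Function.Injective eg := by
    rw [← LinearMap.ker_eq_bot]
    by_contra hker
    have hm₀k : m₀ ∈ LinearMap.ker eg := hideal _ hker
    have h0 : eg m₀ = 0 := hm₀k
    have h1 : envg ⟨m₀, hmkg⟩ = 0 := by rw [← heg]; exact h0
    have h2 : (⟨m₀, hmkg⟩ : LinearMap.ker g) = 0 :=
      henvg.2.1 (by rw [h1, map_zero])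
    exact hm₀ne (congrArg Subtype.val h2)
  -- a retraction q of eg
  obtain ⟨q, hq⟩ := hinjΛ.out eg heginj LinearMap.id
  have hq' : ∀ x, q (eg x) = x := fun x => hq x
  -- q is injective, by essentiality of the image of envg
  have hqinj : Function.Injective q := by
    rw [← LinearMap.ker_eq_bot]
    by_contra hker
    obtain ⟨y, hy, hy0⟩ :=
      Submodule.exists_mem_ne_zero_of_ne_bot (henvg.2.2 _ hker)
    obtain ⟨z, hz⟩ := hy.2
    have hze : eg (z : Λ) = y := by rw [← hz, ← heg]; rfl
    have hqy : q y = 0 := hy.1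
    have hz0 : (z : Λ) = 0 := by rw [← hq' (z : Λ), hze, hqy]
    exact hy0 (by rw [← hze, hz0, map_zero])
  -- hence eg is surjective
  have hegsurj : Function.Surjective eg := fun y =>
    ⟨q y, hqinj (by rw [hq' (q y)])⟩
  set E : Λ ≃ₗ[Λ] Ig := LinearEquiv.ofBijective eg ⟨heginj, hegsurj⟩ with hEdef
  have hE : ∀ x, E x = eg x := fun x => rfl
  have hEs : ∀ x, E.symm (eg x) = x := fun x => by
    rw [← hE, LinearEquiv.symm_apply_apply]
  refine ⟨?_, ?_, ?_⟩
  · -- g - 1 factors through the injective module Ig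
    refine ⟨Ig, inferInstance, inferInstance, henvg.1,
      eg ∘ₗ (g - LinearMap.id), q, ?_⟩
    apply LinearMap.ext; intro x
    simp [hq']
  · -- Mimo(g) ≅ (1 : Λ → Λ) ⊕ (0 → Λ)
    set F : (Λ × Ig) →ₗ[Λ] (Λ × Λ) :=
      ((E.symm : Ig →ₗ[Λ] Λ) ∘ₗ LinearMap.snd Λ Λ Ig).prod
        (LinearMap.fst Λ Λ Ig - m₀ • ((E.symm : Ig →ₗ[Λ] Λ) ∘ₗ LinearMap.snd Λ Λ Ig))
      with hF
    set G : (Λ × Λ) →ₗ[Λ] (Λ × Ig) :=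
      (LinearMap.snd Λ Λ Λ + m₀ • LinearMap.fst Λ Λ Λ).prod
        ((E : Λ →ₗ[Λ] Ig) ∘ₗ LinearMap.fst Λ Λ Λ) with hG
    have hFG : F ∘ₗ G = LinearMap.id := by
      apply LinearMap.ext; rintro ⟨b, c⟩
      simp [hF, hG, Prod.ext_iff, smul_eq_mul]
    have hGF : G ∘ₗ F = LinearMap.id := by
      apply LinearMap.ext; rintro ⟨a, y⟩
      simp [hF, hG, Prod.ext_iff, smul_eq_mul]
    refine ⟨LinearEquiv.refl Λ Λ, LinearEquiv.ofLinear F G hFG hGF, ?_⟩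
    apply LinearMap.ext; intro x
    simp [hF, Prod.ext_iff, smul_eq_mul, hEs, hg]
  · -- not isomorphic to (1 : Λ → Λ)
    rintro ⟨α, β, hβ⟩
    obtain ⟨x, hx⟩ := β.surjective (1, 0)
    have hx2 : β x = (g (α x), eg (α x)) := by
      have := congrArg (fun (φ : Λ →ₗ[Λ] (Λ × Ig)) => φ x) hβ
      simpa using this
    rw [hx] at hx2
    have h2 : eg (α x) = 0 := (Prod.ext_iff.mp hx2).2.symm
    have h3 : α x = 0 := heginj (by rw [h2, map_zero])
    have h4 : (1 : Λ) = g (α x) := (Prod.ext_iff.mp hx2).1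
    rw [h3, map_zero] at h4
    exact one_ne_zero h4
end

section
/- Let Λ be an artin algebra and suppose 0 → (a : A' → A) → (b : B' → B) → (c : C' → C) → 0 is a short exact sequence in the submodule category S(Λ) (both component sequences exact) which is an Auslander-Reiten (almost split) sequence in S(Λ). If the morphism c : C' → C is not a split monomorphism of Λ-modules, then both component sequences 0 → A' → B' → C' → 0 and 0 → A → B → C → 0 are split exact sequences of Λ-modules. -/
universe u

/-! Both splittings come from the right almost split property of `(g', g)`, applied to two
test morphisms into `c`: `(id, c) : id_{C'} → c`, whose sections would give a retraction of
`c`, and `(0, id) : (0 → C) → c`, whose sections would force `C' = 0`, which again makes `c`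
split. Lifting them through `(g', g)` gives sections of `g'` and of `g`. -/

section SplitEpi

variable {Λ : Type*} [Ring Λ] {X' X C' C : Type*}
  [AddCommGroup X'] [Module Λ X'] [AddCommGroup X] [Module Λ X]
  [AddCommGroup C'] [Module Λ C'] [AddCommGroup C] [Module Λ C]

def IsSplitEpiInS (x : X' →ₗ[Λ] X) (c : C' →ₗ[Λ] C) (t' : X' →ₗ[Λ] C') (t : X →ₗ[Λ] C) :
    Prop :=
  ∃ (s' : C' →ₗ[Λ] X') (s : C →ₗ[Λ] X),
    x ∘ₗ s' = s ∘ₗ c ∧ t' ∘ₗ s' = LinearMap.id ∧ t ∘ₗ s = LinearMap.id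

theorem IsSplitEpiInS.exists_retraction {c : C' →ₗ[Λ] C}
    (h : IsSplitEpiInS (LinearMap.id : C' →ₗ[Λ] C') c LinearMap.id c) :
    ∃ r : C →ₗ[Λ] C', r ∘ₗ c = LinearMap.id := by
  obtain ⟨s', s, hcomm, hs', -⟩ := h
  exact ⟨s, hcomm ▸ hs'⟩

theorem IsSplitEpiInS.subsingleton_of_zero [Subsingleton X'] {c : C' →ₗ[Λ] C}
    (h : IsSplitEpiInS (0 : X' →ₗ[Λ] C) c 0 LinearMap.id) :
    Subsingleton C' := by
  obtain ⟨s', -, -, hs', -⟩ := h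
  refine ⟨fun y z => ?_⟩
  simpa using (LinearMap.congr_fun hs' y).symm.trans (LinearMap.congr_fun hs' z)

end SplitEpi

theorem exists_retraction_of_subsingleton {Λ C' C : Type*} [Ring Λ]
    [AddCommGroup C'] [Module Λ C'] [AddCommGroup C] [Module Λ C] [Subsingleton C']
    (c : C' →ₗ[Λ] C) : ∃ r : C →ₗ[Λ] C', r ∘ₗ c = LinearMap.id :=
  ⟨0, Subsingleton.elim _ _⟩

theorem stmt18_general
    (Λ : Type u) [Ring Λ]
    (B' B C' C : Type u)
    [AddCommGroup B'] [Module Λ B']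
    [AddCommGroup B] [Module Λ B]
    [AddCommGroup C'] [Module Λ C'] [Module.Finite Λ C']
    [AddCommGroup C] [Module Λ C] [Module.Finite Λ C]
    (b : B' →ₗ[Λ] B) (c : C' →ₗ[Λ] C)
    (g' : B' →ₗ[Λ] C') (g : B →ₗ[Λ] C)
    -- (g', g) is right almost split: every morphism in S(Λ) to c which is not a
    -- split epimorphism factors through (g', g)
    (hras : ∀ (X' X : Type u)
      [AddCommGroup X'] [Module Λ X'] [Module.Finite Λ X']
      [AddCommGroup X] [Module Λ X] [Module.Finite Λ X]
      (x : X' →ₗ[Λ] X), Function.Injective x →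
      ∀ (t' : X' →ₗ[Λ] C') (t : X →ₗ[Λ] C), c ∘ₗ t' = t ∘ₗ x →
      ¬ (∃ (s' : C' →ₗ[Λ] X') (s : C →ₗ[Λ] X),
          x ∘ₗ s' = s ∘ₗ c ∧ t' ∘ₗ s' = LinearMap.id ∧ t ∘ₗ s = LinearMap.id) →
      ∃ (u' : X' →ₗ[Λ] B') (u : X →ₗ[Λ] B),
        b ∘ₗ u' = u ∘ₗ x ∧ g' ∘ₗ u' = t' ∧ g ∘ₗ u = t)
    -- c is not a split monomorphism of Λ-modules
    (hc : ¬ ∃ r : C →ₗ[Λ] C', r ∘ₗ c = LinearMap.id) :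
    (∃ s' : C' →ₗ[Λ] B', g' ∘ₗ s' = LinearMap.id) ∧
    (∃ s : C →ₗ[Λ] B, g ∘ₗ s = LinearMap.id) := by
  have not_split_id : ¬ IsSplitEpiInS (LinearMap.id : C' →ₗ[Λ] C') c LinearMap.id c :=
    fun h => hc h.exists_retraction
  have not_split_zero : ¬ IsSplitEpiInS (0 : PUnit.{u + 1} →ₗ[Λ] C) c 0 LinearMap.id :=
    fun h => have := h.subsingleton_of_zero; hc (exists_retraction_of_subsingleton c)
  obtain ⟨u', -, -, hu', -⟩ :=
    hras C' C' LinearMap.id Function.injective_id LinearMap.id c rfl not_split_id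
  obtain ⟨-, u, -, -, hu⟩ :=
    hras PUnit C 0 (Function.injective_of_subsingleton _) 0 LinearMap.id (by simp) not_split_zero
  exact ⟨⟨u', hu'⟩, ⟨u, hu⟩⟩

/-- if `0 → a → b → c → 0` is an Auslander-Reiten (almost split) sequence
in `S(Λ)` and `c : C' → C` is not a split monomorphism of modules, then both component
sequences `0 → A' → B' → C' → 0` and `0 → A → B → C → 0` of modules are split exact. -/
theorem stmt18
    (k : Type u) [CommRing k] [IsArtinianRing k]
    (Λ : Type u) [Ring Λ] [Algebra k Λ] [Module.Finite k Λ]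
    (A' A B' B C' C : Type u)
    [AddCommGroup A'] [Module Λ A'] [Module.Finite Λ A']
    [AddCommGroup A] [Module Λ A] [Module.Finite Λ A]
    [AddCommGroup B'] [Module Λ B'] [Module.Finite Λ B']
    [AddCommGroup B] [Module Λ B] [Module.Finite Λ B]
    [AddCommGroup C'] [Module Λ C'] [Module.Finite Λ C']
    [AddCommGroup C] [Module Λ C] [Module.Finite Λ C]
    (a : A' →ₗ[Λ] A) (b : B' →ₗ[Λ] B) (c : C' →ₗ[Λ] C)
    (f' : A' →ₗ[Λ] B') (f : A →ₗ[Λ] B) (g' : B' →ₗ[Λ] C') (g : B →ₗ[Λ] C)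
    (hses : IsSESinS Λ a b c f' f g' g)
    -- the sequence does not split
    (hnonsplit : ¬ ∃ (s' : C' →ₗ[Λ] B') (s : C →ₗ[Λ] B),
      b ∘ₗ s' = s ∘ₗ c ∧ g' ∘ₗ s' = LinearMap.id ∧ g ∘ₗ s = LinearMap.id)
    -- the end terms a and c are indecomposable objects of S(Λ)
    (hindA : ∀ (u : A' →ₗ[Λ] A') (v : A →ₗ[Λ] A), v ∘ₗ a = a ∘ₗ u →
      u ∘ₗ u = u → v ∘ₗ v = v →
      (u = 0 ∧ v = 0) ∨ (u = LinearMap.id ∧ v = LinearMap.id))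
    (hindC : ∀ (u : C' →ₗ[Λ] C') (v : C →ₗ[Λ] C), v ∘ₗ c = c ∘ₗ u →
      u ∘ₗ u = u → v ∘ₗ v = v →
      (u = 0 ∧ v = 0) ∨ (u = LinearMap.id ∧ v = LinearMap.id))
    -- (g', g) is right almost split: every morphism in S(Λ) to c which is not a
    -- split epimorphism factors through (g', g)
    (hras : ∀ (X' X : Type u)
      [AddCommGroup X'] [Module Λ X'] [Module.Finite Λ X']
      [AddCommGroup X] [Module Λ X] [Module.Finite Λ X]
      (x : X' →ₗ[Λ] X), Function.Injective x →
      ∀ (t' : X' →ₗ[Λ] C') (t : X →ₗ[Λ] C), c ∘ₗ t' = t ∘ₗ x →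
      ¬ (∃ (s' : C' →ₗ[Λ] X') (s : C →ₗ[Λ] X),
          x ∘ₗ s' = s ∘ₗ c ∧ t' ∘ₗ s' = LinearMap.id ∧ t ∘ₗ s = LinearMap.id) →
      ∃ (u' : X' →ₗ[Λ] B') (u : X →ₗ[Λ] B),
        b ∘ₗ u' = u ∘ₗ x ∧ g' ∘ₗ u' = t' ∧ g ∘ₗ u = t)
    -- c is not a split monomorphism of Λ-modules
    (hc : ¬ ∃ r : C →ₗ[Λ] C', r ∘ₗ c = LinearMap.id) :
    (∃ s' : C' →ₗ[Λ] B', g' ∘ₗ s' = LinearMap.id) ∧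
    (∃ s : C →ₗ[Λ] B, g ∘ₗ s = LinearMap.id) :=
  stmt18_general Λ B' B C' C b c g' g hras hc
end

section
/- Let Λ be an artin algebra and 0 → A → B → C → 0 an Auslander-Reiten sequence in mod Λ with maps f : A → B and g : B → C. Then the morphism (0, g) : (f : A → B) → (0 → C) in the submodule category S(Λ) is right almost split: it is not a split epimorphism, and every morphism (t', t) : (x' : X' → X) → (0 → C) in S(Λ) that is not a split epimorphism factors through (0, g). -/
universe u

/-- if `0 → A →f B →g C → 0` is an Auslander-Reiten sequence in `mod Λ`,
then the morphism `(0, g) : (f : A → B) → (0 → C)` in `S(Λ)` is right almost split: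
it is not a split epimorphism, and every morphism `(t', t) : (x : X' → X) → (0 → C)`
in `S(Λ)` which is not a split epimorphism factors through `(0, g)`. -/
theorem stmt19
    (k : Type u) [CommRing k] [IsArtinianRing k]
    (Λ : Type u) [Ring Λ] [Algebra k Λ] [Module.Finite k Λ]
    (A B C : Type u)
    [AddCommGroup A] [Module Λ A] [Module.Finite Λ A]
    [AddCommGroup B] [Module Λ B] [Module.Finite Λ B]
    [AddCommGroup C] [Module Λ C] [Module.Finite Λ C]
    (f : A →ₗ[Λ] B) (g : B →ₗ[Λ] C)
    -- 0 → A → B → C → 0 is a short exact sequence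
    (hf : Function.Injective f) (hg : Function.Surjective g)
    (hex : LinearMap.ker g = LinearMap.range f)
    -- it does not split
    (hnonsplit : ¬ ∃ s : C →ₗ[Λ] B, g ∘ₗ s = LinearMap.id)
    -- A and C are indecomposable
    [Nontrivial A] [Nontrivial C]
    (hindA : ∀ u : A →ₗ[Λ] A, u ∘ₗ u = u → u = 0 ∨ u = LinearMap.id)
    (hindC : ∀ u : C →ₗ[Λ] C, u ∘ₗ u = u → u = 0 ∨ u = LinearMap.id)
    -- g is right almost split in mod Λ
    (hras : ∀ (X : Type u) [AddCommGroup X] [Module Λ X] [Module.Finite Λ X]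
      (t : X →ₗ[Λ] C), (¬ ∃ s : C →ₗ[Λ] X, t ∘ₗ s = LinearMap.id) →
      ∃ u : X →ₗ[Λ] B, g ∘ₗ u = t) :
    -- (0, g) is not a split epimorphism in S(Λ)
    (¬ ∃ s : C →ₗ[Λ] B, g ∘ₗ s = LinearMap.id) ∧
    -- every morphism (t', t) : (x : X' → X) → (0 → C) in S(Λ) which is not a split
    -- epimorphism factors through (0, g)
    (∀ (X' X : Type u)
      [AddCommGroup X'] [Module Λ X'] [Module.Finite Λ X']
      [AddCommGroup X] [Module Λ X] [Module.Finite Λ X]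
      (x : X' →ₗ[Λ] X), Function.Injective x →
      ∀ t : X →ₗ[Λ] C, t ∘ₗ x = 0 →
      (¬ ∃ s : C →ₗ[Λ] X, t ∘ₗ s = LinearMap.id) →
      ∃ (u' : X' →ₗ[Λ] A) (u : X →ₗ[Λ] B),
        f ∘ₗ u' = u ∘ₗ x ∧ g ∘ₗ u = t) := by
  refine ⟨hnonsplit, ?_⟩
  intro X' X _ _ _ _ _ _ x hx t htx hts
  obtain ⟨u, hu⟩ := hras X t hts
  have hmem : ∀ y : X', u (x y) ∈ LinearMap.range f := by
    intro y
    rw [← hex, LinearMap.mem_ker]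
    calc g (u (x y)) = (g ∘ₗ u) (x y) := rfl
      _ = t (x y) := by rw [hu]
      _ = (t ∘ₗ x) y := rfl
      _ = 0 := by rw [htx]; rfl
  let e := LinearEquiv.ofInjective f hf
  have key : ∀ z : LinearMap.range f, f (e.symm z) = (z : B) := by
    intro z
    have h1 : f (e.symm z) = ((e (e.symm z) : LinearMap.range f) : B) := rfl
    rw [h1, e.apply_symm_apply]
  refine ⟨e.symm ∘ₗ LinearMap.codRestrict (LinearMap.range f) (u ∘ₗ x)
    (fun y => hmem y), u, ?_, hu⟩
  ext y
  simp only [LinearMap.comp_apply]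
  exact (key _).trans rfl
end
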